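/- arXiv:2503.21733 — 12 statements merged into one kernel-verified Lean document; each statement's English description precedes it below -/
import Mathlib

section
/- Let G be a simple graph and let e be a bridge of G. Then for all vertices a and b, a and b are biconnected in G if and only if a and b are biconnected in the graph obtained from G by deleting e. -/
/-!
Two internally disjoint `a`–`b` paths `p ≠ q` close up to the cycle `p · q⁻¹`, and a bridge lies on
no cycle; so both paths avoid the bridge and survive its deletion. Conversely, paths of a subgraph
are paths of the graph.
-/

def Biconnected {V : Type*} (H : SimpleGraph V) (a b : V) : Prop :=
  a ≠ b ∧ ∃ p q : H.Path a b, p ≠ q ∧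
    ∀ x, x ∈ p.1.support → x ∈ q.1.support → (x = a ∨ x = b)

namespace SimpleGraph

variable {V : Type*} {G H : SimpleGraph V} {a b : V}

lemma Walk.IsPath.isCycle_append_reverse {p q : G.Walk a b} (hp : p.IsPath) (hq : q.IsPath)
    (hpq : p ≠ q) (hsupp : ∀ x, x ∈ p.support → x ∈ q.support → x = a ∨ x = b) :
    (p.append q.reverse).IsCycle := by
  refine hp.isCycle_append hq.reverse (fun x hxp hxq => ?_) ?_
  · have hxa : x ≠ a := by
      rintro rfl
      exact (p.cons_tail_support ▸ hp.support_nodup).notMem hxp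
    have hxb : x ≠ b := by
      rintro rfl
      exact (q.reverse.cons_tail_support ▸ hq.reverse.support_nodup).notMem hxq
    have hxq' : x ∈ q.support := by
      simpa only [Walk.support_reverse, List.mem_reverse] using List.mem_of_mem_tail hxq
    rcases hsupp x (List.mem_of_mem_tail hxp) hxq' with rfl | rfl
    exacts [hxa rfl, hxb rfl]
  · by_contra! hshort
    exact hpq (Walk.eq_of_length_le_one hshort.1 (by simpa using hshort.2))

lemma Walk.transfer_injective {u v : V} {p q : G.Walk u v} (hp : ∀ e ∈ p.edges, e ∈ H.edgeSet)
    (hq : ∀ e ∈ q.edges, e ∈ H.edgeSet) (h : p.transfer H hp = q.transfer H hq) : p = q :=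
  Walk.ext_support <| by
    simpa only [Walk.support_transfer] using congrArg Walk.support h

end SimpleGraph

namespace Biconnected

open SimpleGraph

variable {V : Type*} {G H : SimpleGraph V} {a b : V}

lemma of_transfer {p q : G.Path a b} (hab : a ≠ b) (hpq : p ≠ q)
    (hsupp : ∀ x, x ∈ p.1.support → x ∈ q.1.support → x = a ∨ x = b)
    (hpH : ∀ e ∈ p.1.edges, e ∈ H.edgeSet) (hqH : ∀ e ∈ q.1.edges, e ∈ H.edgeSet) :
    Biconnected H a b := by
  refine ⟨hab, ⟨p.1.transfer H hpH, p.2.transfer hpH⟩, ⟨q.1.transfer H hqH, q.2.transfer hqH⟩,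
    fun h => hpq (Subtype.ext (Walk.transfer_injective hpH hqH (congrArg Subtype.val h))), ?_⟩
  simpa only [Walk.support_transfer] using hsupp

lemma mono (hGH : G ≤ H) (h : Biconnected G a b) : Biconnected H a b := by
  obtain ⟨hab, p, q, hpq, hsupp⟩ := h
  exact .of_transfer hab hpq hsupp (fun e he => edgeSet_mono hGH (p.1.edges_subset_edgeSet he))
    (fun e he => edgeSet_mono hGH (q.1.edges_subset_edgeSet he))

lemma deleteEdges {s : Set (Sym2 V)} (h : Biconnected G a b)
    (hs : ∀ e ∈ s, G.IsBridge e) : Biconnected (G.deleteEdges s) a b := by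
  obtain ⟨hab, p, q, hpq, hsupp⟩ := h
  have hcycle := p.2.isCycle_append_reverse q.2 (Subtype.coe_injective.ne hpq) hsupp
  have hcycle_avoids : ∀ e ∈ (p.1.append q.1.reverse).edges, e ∉ s :=
    fun e he hes => (hs e hes).notMem_edges_of_isCycle hcycle he
  simp only [Walk.edges_append, Walk.edges_reverse, List.mem_append,
    List.mem_reverse] at hcycle_avoids
  exact .of_transfer hab hpq hsupp
    (fun e he => edgeSet_deleteEdges s ▸ ⟨p.1.edges_subset_edgeSet he, hcycle_avoids e (.inl he)⟩)
    (fun e he => edgeSet_deleteEdges s ▸ ⟨q.1.edges_subset_edgeSet he, hcycle_avoids e (.inr he)⟩)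

end Biconnected

/-- Let `G` be a simple graph and let `e` be a bridge of `G`. Then for all vertices `a` and
`b`, `a` and `b` are biconnected in `G` if and only if `a` and `b` are biconnected in the
graph obtained from `G` by deleting `e`. -/
theorem bridge_delete_biconnected {V : Type*} (G : SimpleGraph V) (e : Sym2 V)
    (he : G.IsBridge e) (a b : V) :
    Biconnected G a b ↔ Biconnected (G.deleteEdges {e}) a b :=
  ⟨fun h => h.deleteEdges fun _ hf => (Set.mem_singleton_iff.mp hf) ▸ he,
    .mono (G.deleteEdges_le {e})⟩
end

section
/- Let G be a simple graph with spanning forest F, and let ℓ assign a natural-number level to each non-tree edge; for j ∈ ℕ let G_j be the subgraph of G whose edges are the edges of F together with the non-tree edges of level at least j. Let uv be an edge of F, and let e be a non-tree edge whose fundamental path contains uv; set i := ℓ(e), and assume that every non-tree edge whose fundamental path contains uv has level at most i. Let F' be the subgraph obtained from F by removing the edge uv and adding the edge e, and let ℓ' agree with ℓ on all edges of G outside F' other than uv, with ℓ'(uv) := i; let G'_j be the subgraph of G whose edges are the edges of F' together with the edges outside F' of ℓ'-level at least j. Then F' is a spanning forest of G, and for every j ∈ ℕ and all vertices a and b, a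 and b are biconnected in G_j if and only if they are biconnected in G'_j. -/
/-- For a spanning forest `F` of `G` and a level assignment `ℓ` on (non-tree) edges,
`levelGraph G F ℓ j` is the subgraph of `G` whose edges are the edges of `F` together
with the non-tree edges of level at least `j`. -/
def levelGraph {V : Type*} (G F : SimpleGraph V) (ℓ : Sym2 V → ℕ) (j : ℕ) :
    SimpleGraph V :=
  F ⊔ SimpleGraph.fromEdgeSet {e : Sym2 V | e ∈ G.edgeSet ∧ e ∉ F.edgeSet ∧ j ≤ ℓ e}

/-!
Write `D := F - uv`. As `F` is a forest, `u, v` are separated in `D`, and so are `x, y` because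
the fundamental path of `xy` runs through `uv`; hence `F' = D + xy` is again a spanning forest.
By maximality of `i`, a non-tree edge of level `> i` has a fundamental path avoiding `uv`, so its
endpoints are joined in `D`. For `j ≤ i` the graphs `G_j` and `G'_j` coincide. For `j > i` they
differ only in `uv ∈ G_j` and `xy ∈ G'_j`: `G_j - uv = G'_j - xy` joins nothing that `D` does
not, so `uv` is a bridge of `G_j` and `xy` one of `G'_j`. Deleting a bridge preserves
biconnectivity: if it lay on one of two internally disjoint `a`–`b` paths, the other path would
reconnect its endpoints.
-/

open SimpleGraph

section

variable {V : Type*}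

namespace SimpleGraph

variable {G H : SimpleGraph V}

theorem reachable_le_of_adj_le (h : G.Adj ≤ H.Reachable) : G.Reachable ≤ H.Reachable := by
  rw [reachable_eq_reflTransGen, reachable_eq_reflTransGen] at *
  exact fun a b hab => hab.lift' id h

namespace Walk

theorem IsPath.eq_cons_nil_of_mem_edges {a b : V} {p : G.Walk a b} (hp : p.IsPath)
    (he : s(a, b) ∈ p.edges) : p = cons (p.adj_of_mem_edges he) Walk.nil := by
  cases p with
  | nil => simp at he
  | cons h p =>
    rw [cons_isPath_iff] at hp
    rcases List.mem_cons.mp he with he | he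
    · obtain ⟨-, rfl⟩ | ⟨rfl, -⟩ := Sym2.eq_iff.mp he
      · obtain rfl := (isPath_iff_nil.mp hp.1).eq_nil
        rfl
      · exact absurd rfl h.ne
    · exact absurd (p.fst_mem_support_of_mem_edges he) hp.2

theorem IsTrail.reachable_deleteEdges_of_mem_edges {a b x y : V} {w : G.Walk a b}
    (hw : w.IsTrail) (he : s(x, y) ∈ w.edges) :
    (G.deleteEdges {s(x, y)}).Reachable a y ∨ (G.deleteEdges {s(x, y)}).Reachable b y := by
  by_contra! h
  exact hw.not_mem_edges_of_not_reachable h.1 h.2 he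

end Walk

theorem reachable_deleteEdges_sup_edge_iff {F : SimpleGraph V} {x y u v : V} (P : F.Walk x y)
    (hP : P.IsTrail) (he : s(u, v) ∈ P.edges) {a b : V} :
    (F.deleteEdges {s(u, v)} ⊔ edge x y).Reachable a b ↔ F.Reachable a b := by
  set D := F.deleteEdges {s(u, v)}
  have hD : D ≤ D ⊔ edge x y := le_sup_left
  have hxy : (D ⊔ edge x y).Reachable x y := by
    rcases eq_or_ne x y with rfl | hne
    · rfl
    · exact Adj.reachable (Or.inr ((edge_adj ..).mpr ⟨Or.inl ⟨rfl, rfl⟩, hne⟩))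
  have hv := hP.reachable_deleteEdges_of_mem_edges he
  have hu := hP.reachable_deleteEdges_of_mem_edges (Sym2.eq_swap ▸ he)
  rw [Sym2.eq_swap] at hu
  have hxv : (D ⊔ edge x y).Reachable x v := hv.elim (·.mono hD) (hxy.trans <| ·.mono hD)
  have hxu : (D ⊔ edge x y).Reachable x u := hu.elim (·.mono hD) (hxy.trans <| ·.mono hD)
  constructor
  · refine fun h => reachable_le_of_adj_le (fun c d hcd => ?_) _ _ h
    rcases hcd with hcd | hcd
    · exact (deleteEdges_le _ hcd).reachable
    · obtain ⟨⟨rfl, rfl⟩ | ⟨rfl, rfl⟩, -⟩ := (edge_adj ..).mp hcd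
      exacts [P.reachable, P.reachable.symm]
  · refine fun h => reachable_le_of_adj_le (fun c d hcd => ?_) _ _ h
    by_cases hcd' : s(c, d) = s(u, v)
    · obtain ⟨rfl, rfl⟩ | ⟨rfl, rfl⟩ := Sym2.eq_iff.mp hcd'
      exacts [hxu.symm.trans hxv, hxv.symm.trans hxu]
    · exact (hD (deleteEdges_adj.mpr ⟨hcd, by simpa using hcd'⟩)).reachable

theorem IsAcyclic.not_reachable_deleteEdges_of_mem_edges {F : SimpleGraph V} (hF : F.IsAcyclic)
    {x y u v : V} (P : F.Path x y) (he : s(u, v) ∈ P.1.edges) :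
    ¬ (F.deleteEdges {s(u, v)}).Reachable x y := by
  classical
  rw [reachable_deleteEdges_iff_exists_walk]
  rintro ⟨w, hw⟩
  exact hw (w.edges_toPath_subset_edges ((hF.subsingleton_path x y).elim P w.toPath ▸ he))

end SimpleGraph

section Biconnected

variable {H K : SimpleGraph V} {a b : V}

theorem biconnected_of_paths (hab : a ≠ b) (p q : H.Path a b) (hpq : p ≠ q)
    (hdisj : ∀ x, x ∈ p.1.support → x ∈ q.1.support → x = a ∨ x = b)
    (hpK : ∀ e ∈ p.1.edges, e ∈ K.edgeSet) (hqK : ∀ e ∈ q.1.edges, e ∈ K.edgeSet) :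
    Biconnected K a b := by
  refine ⟨hab, ⟨p.1.transfer K hpK, p.2.transfer hpK⟩,
    ⟨q.1.transfer K hqK, q.2.transfer hqK⟩,
    fun h => hpq (Subtype.ext (Walk.ext_support ?_)), ?_⟩
  · simpa only [Walk.support_transfer] using congrArg (·.1.support) h
  · simpa only [Walk.support_transfer] using hdisj

theorem Biconnected.mono_s2 (hHK : H ≤ K) (h : Biconnected H a b) : Biconnected K a b := by
  obtain ⟨hab, p, q, hpq, hdisj⟩ := h
  exact biconnected_of_paths hab p q hpq hdisj
    (fun _ he => edgeSet_mono hHK (p.1.edges_subset_edgeSet he))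
    (fun _ he => edgeSet_mono hHK (q.1.edges_subset_edgeSet he))

theorem notMem_edges_of_isBridge {c d : V} (hb : H.IsBridge s(c, d)) (p q : H.Path a b)
    (hpq : p ≠ q) (hdisj : ∀ x, x ∈ p.1.support → x ∈ q.1.support → x = a ∨ x = b) :
    s(c, d) ∉ p.1.edges := by
  intro hp
  by_cases hq : s(c, d) ∈ q.1.edges
  · have hcd : c ≠ d := (p.1.adj_of_mem_edges hp).ne
    have hc := hdisj c (p.1.fst_mem_support_of_mem_edges hp)
      (q.1.fst_mem_support_of_mem_edges hq)
    have hd := hdisj d (p.1.snd_mem_support_of_mem_edges hp)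
      (q.1.snd_mem_support_of_mem_edges hq)
    have hab : s(a, b) ∈ p.1.edges ∧ s(a, b) ∈ q.1.edges := by
      rcases hc with rfl | rfl <;> rcases hd with rfl | rfl
      · exact absurd rfl hcd
      · exact ⟨hp, hq⟩
      · exact Sym2.eq_swap ▸ ⟨hp, hq⟩
      · exact absurd rfl hcd
    exact hpq (Subtype.ext ((p.2.eq_cons_nil_of_mem_edges hab.1).trans
      (q.2.eq_cons_nil_of_mem_edges hab.2).symm))
  · have hab : (H.deleteEdges {s(c, d)}).Reachable a b :=
      reachable_deleteEdges_iff_exists_walk.mpr ⟨q.1, hq⟩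
    have hd := p.2.isTrail.reachable_deleteEdges_of_mem_edges hp
    have hc := p.2.isTrail.reachable_deleteEdges_of_mem_edges (Sym2.eq_swap ▸ hp)
    rw [Sym2.eq_swap] at hc
    exact hb ((hc.elim id hab.trans).symm.trans (hd.elim id hab.trans))

theorem biconnected_deleteEdges_iff {c d : V} (hb : H.IsBridge s(c, d)) :
    Biconnected (H.deleteEdges {s(c, d)}) a b ↔ Biconnected H a b := by
  refine ⟨Biconnected.mono_s2 (deleteEdges_le _), fun ⟨hab, p, q, hpq, hdisj⟩ => ?_⟩
  refine biconnected_of_paths hab p q hpq hdisj (fun e he => ?_) (fun e he => ?_)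
  · rw [edgeSet_deleteEdges]
    exact ⟨p.1.edges_subset_edgeSet he, by
      rintro rfl
      exact notMem_edges_of_isBridge hb p q hpq hdisj he⟩
  · rw [edgeSet_deleteEdges]
    exact ⟨q.1.edges_subset_edgeSet he, by
      rintro rfl
      exact notMem_edges_of_isBridge hb q p hpq.symm (fun x hq hp => hdisj x hp hq) he⟩

end Biconnected

section LevelGraph

variable {G F F' : SimpleGraph V} {ℓ ℓ' : Sym2 V → ℕ} {j : ℕ} {e : Sym2 V}

theorem mem_edgeSet_levelGraph : e ∈ (levelGraph G F ℓ j).edgeSet ↔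
    e ∈ F.edgeSet ∨ e ∈ G.edgeSet ∧ e ∉ F.edgeSet ∧ j ≤ ℓ e := by
  have hdiag : e ∈ G.edgeSet → e ∉ Sym2.diagSet := G.not_isDiag_of_mem_edgeSet
  simp only [levelGraph, edgeSet_sup, edgeSet_fromEdgeSet, Set.mem_union, Set.mem_sdiff,
    Set.mem_ofPred_eq]
  tauto

theorem mem_edgeSet_levelGraph_of_notMem (heG : e ∈ G.edgeSet) (heF : e ∉ F.edgeSet) :
    e ∈ (levelGraph G F ℓ j).edgeSet ↔ j ≤ ℓ e := by
  simp [mem_edgeSet_levelGraph, heG, heF]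

variable {u v x y : V}

theorem mem_edgeSet_levelGraph_swap_iff
    (hF' : F' = F.deleteEdges {s(u, v)} ⊔ fromEdgeSet {s(x, y)})
    (hℓ' : ∀ e ∈ G.edgeSet, e ∉ F'.edgeSet → e ≠ s(u, v) → ℓ' e = ℓ e)
    (hu : e ≠ s(u, v)) (hx : e ≠ s(x, y)) :
    e ∈ (levelGraph G F ℓ j).edgeSet ↔ e ∈ (levelGraph G F' ℓ' j).edgeSet := by
  have hF : e ∈ F.edgeSet ↔ e ∈ F'.edgeSet := by
    simp [hF', edgeSet_sup, edgeSet_deleteEdges, hu, hx]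
  rw [mem_edgeSet_levelGraph, mem_edgeSet_levelGraph, hF]
  grind

theorem levelGraph_swap_eq (hFG : F ≤ G) (huv : F.Adj u v) (hxyG : G.Adj x y)
    (hxyF : ¬ F.Adj x y) (hF' : F' = F.deleteEdges {s(u, v)} ⊔ fromEdgeSet {s(x, y)})
    (hℓ'uv : ℓ' s(u, v) = ℓ s(x, y))
    (hℓ' : ∀ e ∈ G.edgeSet, e ∉ F'.edgeSet → e ≠ s(u, v) → ℓ' e = ℓ e)
    (hj : j ≤ ℓ s(x, y)) : levelGraph G F ℓ j = levelGraph G F' ℓ' j := by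
  have hne : s(u, v) ≠ s(x, y) := fun h => hxyF (by rwa [← mem_edgeSet, ← h])
  rw [← edgeSet_inj]
  ext e
  by_cases hu : e = s(u, v)
  · subst hu
    have huvF' : s(u, v) ∉ F'.edgeSet := by
      simp [hF', edgeSet_sup, edgeSet_deleteEdges, hne]
    exact iff_of_true (mem_edgeSet_levelGraph.mpr (.inl huv))
      ((mem_edgeSet_levelGraph_of_notMem (hFG huv) huvF').mpr (hℓ'uv ▸ hj))
  by_cases hx : e = s(x, y)
  · subst hx
    have hxyF' : s(x, y) ∈ F'.edgeSet := by simp [hF', edgeSet_sup, hxyG.ne]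
    exact iff_of_true ((mem_edgeSet_levelGraph_of_notMem hxyG hxyF).mpr hj)
      (mem_edgeSet_levelGraph.mpr (.inl hxyF'))
  exact mem_edgeSet_levelGraph_swap_iff hF' hℓ' hu hx

theorem levelGraph_swap_deleteEdges_eq (huv : F.Adj u v) (hxyG : G.Adj x y)
    (hxyF : ¬ F.Adj x y) (hF' : F' = F.deleteEdges {s(u, v)} ⊔ fromEdgeSet {s(x, y)})
    (hℓ'uv : ℓ' s(u, v) = ℓ s(x, y))
    (hℓ' : ∀ e ∈ G.edgeSet, e ∉ F'.edgeSet → e ≠ s(u, v) → ℓ' e = ℓ e)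
    (hj : ℓ s(x, y) < j) :
    (levelGraph G F ℓ j).deleteEdges {s(u, v)} =
      (levelGraph G F' ℓ' j).deleteEdges {s(x, y)} := by
  have hne : s(u, v) ≠ s(x, y) := fun h => hxyF (by rwa [← mem_edgeSet, ← h])
  rw [← edgeSet_inj]
  ext e
  simp only [edgeSet_deleteEdges, Set.mem_sdiff, Set.mem_singleton_iff]
  by_cases hu : e = s(u, v)
  · subst hu
    have huvF' : s(u, v) ∉ F'.edgeSet := by
      simp [hF', edgeSet_sup, edgeSet_deleteEdges, hne]
    refine iff_of_false (fun h => h.2 rfl) fun h => ?_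
    rcases mem_edgeSet_levelGraph.mp h.1 with h | ⟨-, -, h⟩
    exacts [huvF' h, by omega]
  by_cases hx : e = s(x, y)
  · subst hx
    refine iff_of_false (fun h => ?_) (fun h => h.2 rfl)
    have := (mem_edgeSet_levelGraph_of_notMem hxyG hxyF).mp h.1
    omega
  simp only [hu, hx, not_false_eq_true, and_true]
  exact mem_edgeSet_levelGraph_swap_iff hF' hℓ' hu hx

end LevelGraph

theorem reachable_deleteEdges_levelGraph_le {G F : SimpleGraph V} {ℓ : Sym2 V → ℕ} {u v : V}
    {i j : ℕ} (hspan : ∀ a b : V, F.Reachable a b ↔ G.Reachable a b)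
    (hmax : ∀ (p q : V) (Q : F.Path p q), G.Adj p q → ¬ F.Adj p q →
      s(u, v) ∈ Q.1.edges → ℓ s(p, q) ≤ i)
    (hj : i < j) :
    ((levelGraph G F ℓ j).deleteEdges {s(u, v)}).Reachable ≤
      (F.deleteEdges {s(u, v)}).Reachable := by
  classical
  refine reachable_le_of_adj_le fun a b hab => ?_
  obtain ⟨hab, hne⟩ := deleteEdges_adj.mp hab
  rcases (mem_edgeSet_levelGraph (e := s(a, b))).mp hab with hF | ⟨hG, hF, hlevel⟩
  · exact (deleteEdges_adj.mpr ⟨hF, hne⟩).reachable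
  · obtain ⟨W⟩ := (hspan a b).mpr (Adj.reachable hG)
    refine reachable_deleteEdges_iff_exists_walk.mpr ⟨W.toPath.1, fun h => ?_⟩
    have := hmax a b W.toPath hG hF h
    omega

end

/-- The swap lemma: replacing a tree edge `uv` of the spanning forest `F` by a non-tree
edge `e = xy` of maximum level `i` among the non-tree edges whose fundamental path
contains `uv`, and giving `uv` level `i`, yields a spanning forest `F'` of `G` such that
all the level graphs `G_j` and `G'_j` have the same biconnectivity relation. -/
theorem swap_preserves_biconnectivity {V : Type*} (G F : SimpleGraph V)
    (ℓ : Sym2 V → ℕ)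
    (hFG : F ≤ G) (hacyc : F.IsAcyclic)
    (hspan : ∀ a b : V, F.Reachable a b ↔ G.Reachable a b)
    (u v x y : V) (huv : F.Adj u v)
    (hxyG : G.Adj x y) (hxyF : ¬ F.Adj x y)
    (P : F.Path x y) (hP : s(u, v) ∈ P.1.edges)
    (i : ℕ) (hi : i = ℓ s(x, y))
    (hmax : ∀ (p q : V) (Q : F.Path p q), G.Adj p q → ¬ F.Adj p q →
      s(u, v) ∈ Q.1.edges → ℓ s(p, q) ≤ i)
    (F' : SimpleGraph V)
    (hF' : F' = F.deleteEdges {s(u, v)} ⊔ SimpleGraph.fromEdgeSet {s(x, y)})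
    (ℓ' : Sym2 V → ℕ)
    (hℓ'uv : ℓ' s(u, v) = i)
    (hℓ' : ∀ e ∈ G.edgeSet, e ∉ F'.edgeSet → e ≠ s(u, v) → ℓ' e = ℓ e) :
    F' ≤ G ∧ F'.IsAcyclic ∧ (∀ a b : V, F'.Reachable a b ↔ G.Reachable a b) ∧
      ∀ (j : ℕ) (a b : V),
        Biconnected (levelGraph G F ℓ j) a b ↔ Biconnected (levelGraph G F' ℓ' j) a b := by
  subst hi
  have hF'D : F' = F.deleteEdges {s(u, v)} ⊔ edge x y := hF'
  have hDxy := hacyc.not_reachable_deleteEdges_of_mem_edges P hP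
  refine ⟨?_, ?_, fun a b => ?_, fun j a b => ?_⟩
  · rw [hF'D]
    exact sup_le ((deleteEdges_le _).trans hFG) ((edge_le_iff G).mpr (.inr hxyG))
  · rw [hF'D]
    exact (hacyc.anti (deleteEdges_le _)).sup_edge_of_not_reachable hDxy
  · rw [hF'D, reachable_deleteEdges_sup_edge_iff P.1 P.2.isTrail hP, hspan]
  rcases le_or_gt j (ℓ s(x, y)) with hj | hj
  · rw [levelGraph_swap_eq hFG huv hxyG hxyF hF' hℓ'uv hℓ' hj]
  have hreach := reachable_deleteEdges_levelGraph_le hspan hmax hj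
  have hdel := levelGraph_swap_deleteEdges_eq huv hxyG hxyF hF' hℓ'uv hℓ' hj
  have hbuv : (levelGraph G F ℓ j).IsBridge s(u, v) := fun h =>
    isBridge_iff.mp (isAcyclic_iff_forall_adj_isBridge.mp hacyc huv) (hreach _ _ h)
  have hbxy : (levelGraph G F' ℓ' j).IsBridge s(x, y) := fun h => hDxy (hreach _ _ (hdel ▸ h))
  rw [← biconnected_deleteEdges_iff hbuv, hdel, biconnected_deleteEdges_iff hbxy]
end

section
/- Let G be a simple graph, let e be an edge of G with endpoints u and v, and let Q be a path from u to v in G − e (the graph obtained from G by deleting e). Let x be a vertex of G that is not an internal vertex of Q. Then for all vertices a and b adjacent to x in G − e, a and b are biconnected in G if and only if a and b are biconnected in G − e. -/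
/-- Let `G` be a simple graph, let `e` be an edge of `G` with endpoints `u` and `v`, and
let `Q` be a path from `u` to `v` in `G − e`. Let `x` be a vertex of `G` that is not an
internal vertex of `Q`. Then for all vertices `a` and `b` adjacent to `x` in `G − e`,
`a` and `b` are biconnected in `G` if and only if they are biconnected in `G − e`. -/
theorem biconnected_delete_of_not_internal {V : Type*} (G : SimpleGraph V) (u v : V)
    (he : G.Adj u v)
    (Q : (G.deleteEdges {s(u, v)}).Path u v) (x : V)
    (hx : ¬ (x ∈ Q.1.support ∧ x ≠ u ∧ x ≠ v))
    (a b : V)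
    (ha : (G.deleteEdges {s(u, v)}).Adj x a)
    (hb : (G.deleteEdges {s(u, v)}).Adj x b) :
    Biconnected G a b ↔ Biconnected (G.deleteEdges {s(u, v)}) a b := by
  classical
  have hxa : x ≠ a := ha.ne
  have hxb : x ≠ b := hb.ne
  -- From biconnectedness in any graph H, extract a walk from a to b avoiding x.
  have extract : ∀ (H : SimpleGraph V), Biconnected H a b →
      ∃ w : H.Walk a b, x ∉ w.support := by
    rintro H ⟨hab, p, q, hpq, hcomm⟩
    by_cases hp : x ∈ p.1.support
    · refine ⟨q.1, fun hq => ?_⟩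
      rcases hcomm x hp hq with h | h
      · exact hxa h
      · exact hxb h
    · exact ⟨p.1, hp⟩
  -- From a walk in H from a to b avoiding x, build biconnectedness in H
  -- (the other path being a - x - b).
  have build : ∀ (H : SimpleGraph V) (ha' : H.Adj x a) (hb' : H.Adj x b)
      (hab : a ≠ b) (W : H.Walk a b), x ∉ W.support →
      Biconnected H a b := by
    intro H ha' hb' hab W hW
    have hr : (SimpleGraph.Walk.cons ha'.symm
        (SimpleGraph.Walk.cons hb' SimpleGraph.Walk.nil) : H.Walk a b).IsPath := by
      rw [SimpleGraph.Walk.isPath_def]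
      simp [hab, hxa.symm, hxb]
    set q' := W.toPath with hq'def
    have hq' : x ∉ q'.1.support := fun h => hW (W.support_toPath_subset h)
    refine ⟨hab, ⟨_, hr⟩, q', ?_, ?_⟩
    · intro h
      apply hq'
      rw [← h]
      simp
    · intro z hz1 hz2
      have hz : z = a ∨ z = x ∨ z = b := by simpa using hz1
      rcases hz with h | h | h
      · exact Or.inl h
      · exact absurd hz2 (h ▸ hq')
      · exact Or.inr h
  -- Splice: turn a walk in G avoiding x into a walk in G' avoiding x,
  -- replacing each use of the edge uv by Q (or its reverse).
  have splice : ∀ {c d : V} (w : G.Walk c d), x ∉ w.support →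
      ∃ W : (G.deleteEdges {s(u, v)}).Walk c d, x ∉ W.support := by
    intro c d w
    induction w with
    | nil =>
      intro h
      exact ⟨SimpleGraph.Walk.nil, by simpa using h⟩
    | @cons c d e hadj w' ih =>
      intro h
      rw [SimpleGraph.Walk.support_cons, List.mem_cons] at h
      push_neg at h
      obtain ⟨hxc, hxw'⟩ := h
      obtain ⟨W', hW'⟩ := ih hxw'
      have hxd : x ≠ d := fun hh => hxw' (hh ▸ w'.start_mem_support)
      by_cases hcd : s(c, d) = s(u, v)
      · -- replace this edge by Q or Q.reverse
        have hxQ : x ∉ Q.1.support := by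
          intro hm
          have := hx ⟨hm, ?_, ?_⟩
          · exact this
          · rcases Sym2.eq_iff.mp hcd with ⟨h1, h2⟩ | ⟨h1, h2⟩
            · exact h1 ▸ hxc
            · exact h2 ▸ hxd
          · rcases Sym2.eq_iff.mp hcd with ⟨h1, h2⟩ | ⟨h1, h2⟩
            · exact h2 ▸ hxd
            · exact h1 ▸ hxc
        rcases Sym2.eq_iff.mp hcd with ⟨h1, h2⟩ | ⟨h1, h2⟩
        · subst h1; subst h2
          refine ⟨Q.1.append W', ?_⟩
          rw [SimpleGraph.Walk.support_append, List.mem_append]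
          push_neg
          exact ⟨hxQ, fun hm => hW' (List.mem_of_mem_tail hm)⟩
        · subst h1; subst h2
          refine ⟨Q.1.reverse.append W', ?_⟩
          rw [SimpleGraph.Walk.support_append, List.mem_append]
          push_neg
          refine ⟨?_, fun hm => hW' (List.mem_of_mem_tail hm)⟩
          rw [SimpleGraph.Walk.support_reverse, List.mem_reverse]
          exact hxQ
      · -- the edge survives in G'
        have hadj' : (G.deleteEdges {s(u, v)}).Adj c d := by
          rw [SimpleGraph.deleteEdges_adj]
          exact ⟨hadj, by simpa using hcd⟩
        refine ⟨SimpleGraph.Walk.cons hadj' W', ?_⟩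
        rw [SimpleGraph.Walk.support_cons, List.mem_cons]
        push_neg
        exact ⟨hxc, hW'⟩
  have hle : G.deleteEdges {s(u, v)} ≤ G := SimpleGraph.deleteEdges_le _
  constructor
  · intro h
    obtain ⟨w, hw⟩ := extract G h
    obtain ⟨W, hW⟩ := splice w hw
    exact build (G.deleteEdges {s(u, v)}) ha hb h.1 W hW
  · intro h
    obtain ⟨w, hw⟩ := extract (G.deleteEdges {s(u, v)}) h
    have hedges : ∀ e ∈ w.edges, e ∈ G.edgeSet := fun e hee =>
      SimpleGraph.edgeSet_mono hle (w.edges_subset_edgeSet hee)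
    refine build G (hle ha) (hle hb) h.1 (w.transfer G hedges) ?_
    rw [SimpleGraph.Walk.support_transfer]
    exact hw
end

section
/- Let G be a simple graph, let e be an edge of G with endpoints u and v, and let Q be a path from u to v in G − e (the graph obtained from G by deleting e). Let x be an internal vertex of Q, and let w₁ and w₂ be the two neighbors of x on Q. For a vertex c, write c ∈ cl(w) (for w ∈ {w₁, w₂}) if c = w or c and w are biconnected in G − e. Then for all distinct vertices a and b adjacent to x in G − e, a and b are biconnected in G if and only if either a and b are biconnected in G − e, or both a ∈ cl(w₁) ∪ cl(w₂) and b ∈ cl(w₁) ∪ cl(w₂). -/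
/-- `c ∈ cl(w)` in the graph `H`: `c = w` or `c` and `w` are biconnected in `H`. -/
def InCl {V : Type*} (H : SimpleGraph V) (w c : V) : Prop :=
  c = w ∨ Biconnected H c w

open SimpleGraph

section

variable {V : Type*} {G : SimpleGraph V} {a b x : V}

namespace SimpleGraph

lemma Walk.reachable_deleteIncidenceSet_of_notMem_support (W : G.Walk a b)
    (hx : x ∉ W.support) : (G.deleteIncidenceSet x).Reachable a b :=
  ⟨W.toDeleteEdges _ fun _ he hex => hx (W.mem_support_of_mem_edges he hex.2)⟩

lemma Walk.notMem_support_of_deleteIncidenceSet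
    (W : (G.deleteIncidenceSet x).Walk a b) (ha : a ≠ x) : x ∉ W.support := by
  induction W with
  | nil => simpa using ha.symm
  | cons h W ih =>
    rw [deleteIncidenceSet_adj] at h
    simpa [ha.symm] using ih h.2.2

lemma Reachable.exists_walk_notMem_support
    (h : (G.deleteIncidenceSet x).Reachable a b) (ha : a ≠ x) :
    ∃ W : G.Walk a b, x ∉ W.support := by
  obtain ⟨W⟩ := h
  refine ⟨W.mapLe (G.deleteIncidenceSet_le x), ?_⟩
  rw [Walk.support_mapLe_eq_support]
  exact W.notMem_support_of_deleteIncidenceSet ha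

lemma deleteEdges_deleteIncidenceSet (s : Set (Sym2 V)) (x : V) :
    (G.deleteEdges s).deleteIncidenceSet x = (G.deleteIncidenceSet x).deleteEdges s := by
  ext
  simp only [deleteIncidenceSet_adj, deleteEdges_adj]
  tauto

lemma Reachable.reachable_congr_right {c w u : V} (h : G.Reachable w u) :
    G.Reachable c w ↔ G.Reachable c u :=
  ⟨(·.trans h), (·.trans h.symm)⟩

lemma Walk.reachable_deleteEdges_or {u v : V} (W : G.Walk a b) :
    (G.deleteEdges {s(u, v)}).Reachable a b ∨
      (((G.deleteEdges {s(u, v)}).Reachable a u ∨ (G.deleteEdges {s(u, v)}).Reachable a v) ∧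
        ((G.deleteEdges {s(u, v)}).Reachable b u ∨ (G.deleteEdges {s(u, v)}).Reachable b v)) := by
  induction W with
  | nil => exact Or.inl .rfl
  | @cons c d b h W ih =>
    by_cases he : s(c, d) = s(u, v)
    · refine Or.inr ⟨?_, ?_⟩
      · rcases Sym2.eq_iff.mp he with ⟨rfl, -⟩ | ⟨rfl, -⟩
        exacts [Or.inl .rfl, Or.inr .rfl]
      · rcases ih with hdb | ⟨-, hb⟩
        · rcases Sym2.eq_iff.mp he with ⟨-, rfl⟩ | ⟨-, rfl⟩
          exacts [Or.inr hdb.symm, Or.inl hdb.symm]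
        · exact hb
    · have hcd : (G.deleteEdges {s(u, v)}).Adj c d := deleteEdges_adj.mpr ⟨h, he⟩
      rcases ih with hdb | ⟨hd, hb⟩
      · exact Or.inl (hcd.reachable.trans hdb)
      · exact Or.inr ⟨hd.imp hcd.reachable.trans hcd.reachable.trans, hb⟩

lemma reachable_iff_reachable_deleteEdges {u v : V} (huv : G.Adj u v) :
    G.Reachable a b ↔ (G.deleteEdges {s(u, v)}).Reachable a b ∨
      (((G.deleteEdges {s(u, v)}).Reachable a u ∨ (G.deleteEdges {s(u, v)}).Reachable a v) ∧
        ((G.deleteEdges {s(u, v)}).Reachable b u ∨ (G.deleteEdges {s(u, v)}).Reachable b v)) := by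
  refine ⟨fun ⟨W⟩ => W.reachable_deleteEdges_or, ?_⟩
  have hle := G.deleteEdges_le {s(u, v)}
  rintro (hab | ⟨ha, hb⟩)
  · exact hab.mono hle
  · have hu : ∀ c, (G.deleteEdges {s(u, v)}).Reachable c u ∨
        (G.deleteEdges {s(u, v)}).Reachable c v → G.Reachable c u := by
      rintro c (hc | hc)
      exacts [hc.mono hle, (hc.mono hle).trans huv.reachable.symm]
    exact (hu a ha).trans (hu b hb).symm

lemma Walk.IsPath.reachable_deleteIncidenceSet_snd {v : V} {p : G.Walk x v}
    (hp : p.IsPath) (hnil : ¬p.Nil) : (G.deleteIncidenceSet x).Reachable p.snd v := by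
  refine p.tail.reachable_deleteIncidenceSet_of_notMem_support fun hx => ?_
  have hnodup := hp.support_nodup
  rw [← Walk.cons_support_tail hnil, List.nodup_cons] at hnodup
  exact hnodup.1 hx

lemma Walk.IsPath.exists_reachable_deleteIncidenceSet_ends {u v : V}
    {Q : G.Walk u v} (hQ : Q.IsPath) (hx : x ∈ Q.support) (hxu : x ≠ u) (hxv : x ≠ v) :
    ∃ p n, (G.deleteIncidenceSet x).Reachable p u ∧ (G.deleteIncidenceSet x).Reachable n v ∧
      ∀ w, s(x, w) ∈ Q.edges → w = p ∨ w = n := by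
  classical
  set A := (Q.takeUntil x hx).reverse
  set B := Q.dropUntil x hx
  have hA : A.IsPath := (hQ.takeUntil hx).reverse
  have hB : B.IsPath := hQ.dropUntil hx
  have hAnil : ¬A.Nil := Walk.not_nil_of_ne hxu
  have hBnil : ¬B.Nil := Walk.not_nil_of_ne hxv
  refine ⟨A.snd, B.snd, hA.reachable_deleteIncidenceSet_snd hAnil,
    hB.reachable_deleteIncidenceSet_snd hBnil, fun w hw => ?_⟩
  rw [← Q.take_spec hx, Walk.edges_append, List.mem_append] at hw
  rcases hw with hw | hw
  · refine Or.inl (hA.eq_snd_of_mem_edges ?_)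
    rwa [Walk.edges_reverse, List.mem_reverse]
  · exact Or.inr (hB.eq_snd_of_mem_edges hw)

lemma Walk.IsPath.reachable_deleteIncidenceSet_or_iff {u v w₁ w₂ : V}
    {Q : G.Walk u v} (hQ : Q.IsPath) (hx : x ∈ Q.support) (hxu : x ≠ u) (hxv : x ≠ v)
    (hw : w₁ ≠ w₂) (hw₁ : s(x, w₁) ∈ Q.edges) (hw₂ : s(x, w₂) ∈ Q.edges) (c : V) :
    (G.deleteIncidenceSet x).Reachable c w₁ ∨ (G.deleteIncidenceSet x).Reachable c w₂ ↔
      (G.deleteIncidenceSet x).Reachable c u ∨ (G.deleteIncidenceSet x).Reachable c v := by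
  obtain ⟨p, n, hpu, hnv, hpn⟩ := hQ.exists_reachable_deleteIncidenceSet_ends hx hxu hxv
  rcases hpn w₁ hw₁ with rfl | rfl <;> rcases hpn w₂ hw₂ with rfl | rfl
  · exact absurd rfl hw
  · exact or_congr hpu.reachable_congr_right hnv.reachable_congr_right
  · exact or_comm.trans (or_congr hpu.reachable_congr_right hnv.reachable_congr_right)
  · exact absurd rfl hw

end SimpleGraph

lemma biconnected_of_walk_notMem_support (hab : a ≠ b) (hax : G.Adj a x) (hxb : G.Adj x b)
    (W : G.Walk a b) (hW : x ∉ W.support) : Biconnected G a b := by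
  classical
  have hP : (Walk.cons hax (Walk.cons hxb Walk.nil)).IsPath := by
    simp [Walk.isPath_def, hax.ne, hxb.ne, hab]
  refine ⟨hab, ⟨_, hP⟩, W.toPath, fun h => ?_, fun y hy hyW => ?_⟩
  · have hx : x ∈ (W.toPath : G.Walk a b).support := by rw [← h]; simp
    exact hW (Walk.support_toPath_subset_support W hx)
  · simp only [Walk.support_cons, Walk.support_nil, List.mem_cons, List.not_mem_nil,
      or_false] at hy
    rcases hy with rfl | rfl | rfl
    · exact Or.inl rfl
    · exact absurd (Walk.support_toPath_subset_support W hyW) hW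
    · exact Or.inr rfl

lemma Biconnected.exists_walk_notMem_support (h : Biconnected G a b) (hxa : x ≠ a)
    (hxb : x ≠ b) : ∃ W : G.Walk a b, x ∉ W.support := by
  obtain ⟨-, p, q, -, hpq⟩ := h
  by_cases hxp : x ∈ p.1.support
  · exact ⟨q.1, fun hxq => (hpq x hxp hxq).elim hxa hxb⟩
  · exact ⟨p.1, hxp⟩

lemma biconnected_iff_reachable_deleteIncidenceSet (hab : a ≠ b) (ha : G.Adj x a)
    (hb : G.Adj x b) : Biconnected G a b ↔ (G.deleteIncidenceSet x).Reachable a b := by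
  constructor
  · intro h
    obtain ⟨W, hW⟩ := h.exists_walk_notMem_support ha.ne hb.ne
    exact W.reachable_deleteIncidenceSet_of_notMem_support hW
  · intro h
    obtain ⟨W, hW⟩ := h.exists_walk_notMem_support ha.ne.symm
    exact biconnected_of_walk_notMem_support hab ha.symm hb W hW

lemma inCl_iff_reachable_deleteIncidenceSet {w : V} (ha : G.Adj x a) (hw : G.Adj x w) :
    InCl G w a ↔ (G.deleteIncidenceSet x).Reachable a w := by
  by_cases haw : a = w
  · subst haw
    simp [InCl]
  · rw [InCl, biconnected_iff_reachable_deleteIncidenceSet haw ha hw, or_iff_right haw]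

end

/-- Let `G` be a simple graph, let `e` be an edge of `G` with endpoints `u` and `v`, and
let `Q` be a path from `u` to `v` in `G − e`. Let `x` be an internal vertex of `Q`, and
let `w₁` and `w₂` be the two neighbors of `x` on `Q`. Then for all distinct vertices
`a` and `b` adjacent to `x` in `G − e`, `a` and `b` are biconnected in `G` if and only if
either `a` and `b` are biconnected in `G − e`, or both `a ∈ cl(w₁) ∪ cl(w₂)` and
`b ∈ cl(w₁) ∪ cl(w₂)`. -/
theorem biconnected_delete_of_internal {V : Type*} (G : SimpleGraph V) (u v : V)
    (he : G.Adj u v)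
    (Q : (G.deleteEdges {s(u, v)}).Path u v) (x : V)
    (hxQ : x ∈ Q.1.support) (hxu : x ≠ u) (hxv : x ≠ v)
    (w₁ w₂ : V) (hw : w₁ ≠ w₂)
    (hw₁ : s(x, w₁) ∈ Q.1.edges) (hw₂ : s(x, w₂) ∈ Q.1.edges)
    (a b : V) (hab : a ≠ b)
    (ha : (G.deleteEdges {s(u, v)}).Adj x a)
    (hb : (G.deleteEdges {s(u, v)}).Adj x b) :
    Biconnected G a b ↔
      (Biconnected (G.deleteEdges {s(u, v)}) a b ∨
        ((InCl (G.deleteEdges {s(u, v)}) w₁ a ∨ InCl (G.deleteEdges {s(u, v)}) w₂ a) ∧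
         (InCl (G.deleteEdges {s(u, v)}) w₁ b ∨ InCl (G.deleteEdges {s(u, v)}) w₂ b))) := by
  have hcl := Q.2.reachable_deleteIncidenceSet_or_iff hxQ hxu hxv hw hw₁ hw₂
  have hxw₁ := Q.1.adj_of_mem_edges hw₁
  have hxw₂ := Q.1.adj_of_mem_edges hw₂
  have huv : (G.deleteIncidenceSet x).Adj u v :=
    deleteIncidenceSet_adj.mpr ⟨he, hxu.symm, hxv.symm⟩
  rw [biconnected_iff_reachable_deleteIncidenceSet hab (G.deleteEdges_le _ ha)
      (G.deleteEdges_le _ hb),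
    biconnected_iff_reachable_deleteIncidenceSet hab ha hb,
    inCl_iff_reachable_deleteIncidenceSet ha hxw₁,
    inCl_iff_reachable_deleteIncidenceSet ha hxw₂,
    inCl_iff_reachable_deleteIncidenceSet hb hxw₁,
    inCl_iff_reachable_deleteIncidenceSet hb hxw₂,
    hcl, hcl, deleteEdges_deleteIncidenceSet]
  exact reachable_iff_reachable_deleteEdges huv
end

section
/- Let G be a simple graph with at least 3 vertices in which every two distinct vertices are biconnected, and let e be an edge of G with endpoints u and v. Let c be a cutvertex of G − e (the graph obtained from G by deleting e), i.e., there exist vertices a, b ≠ c that are connected in G − e but not in (G − e) − c. Then c ∉ {u, v}, and c is an internal vertex of every path from u to v in G − e. -/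
/-- The graph obtained from `H` by deleting the vertex `c` and all edges incident to it
(keeping the same vertex type). -/
def removeVertex {V : Type*} (H : SimpleGraph V) (c : V) : SimpleGraph V where
  Adj a b := H.Adj a b ∧ a ≠ c ∧ b ≠ c
  symm := by
    refine ⟨?_⟩
    intro a b h
    exact ⟨h.1.symm, h.2.2, h.2.1⟩
  loopless := by
    refine ⟨?_⟩
    intro a h
    exact H.irrefl h.1

/-!
Since `G` is 2-connected, `a` and `b` stay connected in `G - c`. They are separated in
`(G - e) - c = (G - c) - e`, so `e` must be an edge of `G - c` (whence `c ∉ {u, v}`), and `u`, `v`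
must be separated in `(G - c) - e` as well; so no `u`-`v` path of `G - e` can avoid `c`.
-/

open SimpleGraph

section

variable {V : Type*}

@[simp]
lemma removeVertex_adj {H : SimpleGraph V} {c a b : V} :
    (removeVertex H c).Adj a b ↔ H.Adj a b ∧ a ≠ c ∧ b ≠ c :=
  Iff.rfl

lemma removeVertex_deleteEdges (H : SimpleGraph V) (c : V) (s : Set (Sym2 V)) :
    removeVertex (H.deleteEdges s) c = (removeVertex H c).deleteEdges s := by
  ext a b
  simp only [removeVertex_adj, deleteEdges_adj]
  tauto

lemma removeVertex_reachable_of_notMem_support {H : SimpleGraph V} {a b c : V} (p : H.Walk a b)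
    (hc : c ∉ p.support) : (removeVertex H c).Reachable a b := by
  refine ⟨p.transfer _ fun e he => ?_⟩
  induction e with
  | h x y =>
    exact ⟨p.adj_of_mem_edges he, ne_of_mem_of_not_mem (p.fst_mem_support_of_mem_edges he) hc,
      ne_of_mem_of_not_mem (p.snd_mem_support_of_mem_edges he) hc⟩

lemma Biconnected.removeVertex_reachable {H : SimpleGraph V} {a b c : V} (h : Biconnected H a b)
    (hac : a ≠ c) (hbc : b ≠ c) : (removeVertex H c).Reachable a b := by
  obtain ⟨-, p, q, -, hpq⟩ := h
  by_cases hp : c ∈ p.1.support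
  · refine removeVertex_reachable_of_notMem_support q.1 fun hq => ?_
    rcases hpq c hp hq with rfl | rfl
    exacts [hac rfl, hbc rfl]
  · exact removeVertex_reachable_of_notMem_support p.1 hp

lemma SimpleGraph.adj_of_not_reachable_deleteEdges {H : SimpleGraph V} {u v a b : V}
    (hab : H.Reachable a b) (hcut : ¬(H.deleteEdges {s(u, v)}).Reachable a b) : H.Adj u v := by
  by_contra huv
  rw [deleteEdges_eq_self.2 (by simpa using huv)] at hcut
  exact hcut hab

lemma SimpleGraph.Reachable.deleteEdges_of_reachable {H : SimpleGraph V} {u v a b : V}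
    (hab : H.Reachable a b) (huv : (H.deleteEdges {s(u, v)}).Reachable u v) :
    (H.deleteEdges {s(u, v)}).Reachable a b := by
  rw [reachable_iff_reflTransGen] at hab ⊢
  refine Relation.reflTransGen_closed (fun x y hxy => ?_) _ _ hab
  rw [← reachable_iff_reflTransGen]
  by_cases he : s(x, y) = s(u, v)
  · rcases Sym2.eq_iff.1 he with ⟨rfl, rfl⟩ | ⟨rfl, rfl⟩
    exacts [huv, huv.symm]
  · exact Adj.reachable ((deleteEdges_adj ..).2 ⟨hxy, he⟩)

end

theorem cutvertex_internal_of_biconnected_general {V : Type*} (G : SimpleGraph V)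
    (hbi : ∀ a b : V, a ≠ b → Biconnected G a b)
    (u v : V) (c : V)
    (hc : ∃ a b : V, a ≠ c ∧ b ≠ c ∧ (G.deleteEdges {s(u, v)}).Reachable a b ∧
      ¬ (removeVertex (G.deleteEdges {s(u, v)}) c).Reachable a b) :
    c ≠ u ∧ c ≠ v ∧
      ∀ P : (G.deleteEdges {s(u, v)}).Path u v,
        c ∈ P.1.support ∧ c ≠ u ∧ c ≠ v := by
  obtain ⟨a, b, hac, hbc, -, hcut⟩ := hc
  rw [removeVertex_deleteEdges] at hcut
  have hab : a ≠ b := by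
    rintro rfl
    exact hcut .rfl
  have hGc : (removeVertex G c).Reachable a b := (hbi a b hab).removeVertex_reachable hac hbc
  obtain ⟨-, hu, hv⟩ := adj_of_not_reachable_deleteEdges hGc hcut
  refine ⟨hu.symm, hv.symm, fun P => ⟨?_, hu.symm, hv.symm⟩⟩
  by_contra hcP
  have huv := removeVertex_reachable_of_notMem_support P.1 hcP
  rw [removeVertex_deleteEdges] at huv
  exact hcut (hGc.deleteEdges_of_reachable huv)

/-- Let `G` be a simple graph with at least 3 vertices in which every two distinct
vertices are biconnected, and let `e` be an edge of `G` with endpoints `u` and `v`.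
Let `c` be a cutvertex of `G − e`. Then `c ∉ {u, v}`, and `c` is an internal vertex of
every path from `u` to `v` in `G − e`. -/
theorem cutvertex_internal_of_biconnected {V : Type*} (G : SimpleGraph V)
    (h3 : ∃ x y z : V, x ≠ y ∧ x ≠ z ∧ y ≠ z)
    (hbi : ∀ a b : V, a ≠ b → Biconnected G a b)
    (u v : V) (he : G.Adj u v) (c : V)
    (hc : ∃ a b : V, a ≠ c ∧ b ≠ c ∧ (G.deleteEdges {s(u, v)}).Reachable a b ∧
      ¬ (removeVertex (G.deleteEdges {s(u, v)}) c).Reachable a b) :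
    c ≠ u ∧ c ≠ v ∧
      ∀ P : (G.deleteEdges {s(u, v)}).Path u v,
        c ∈ P.1.support ∧ c ≠ u ∧ c ≠ v :=
  cutvertex_internal_of_biconnected_general G hbi u v c hc
end

section
/- Let G be a simple graph and let u be a vertex with neighbors x, y, z. (a) If x ≠ y and x and y are biconnected in G, then u and x are biconnected in G, and u and y are biconnected in G. (b) If x and y are biconnected in G and y and z are biconnected in G, then x = z or x and z are biconnected in G. -/
open SimpleGraph

lemma bicon_aux {V : Type*} {G : SimpleGraph V} {u a b : V}
    (ha : G.Adj u a) (hb : G.Adj u b) (hab : a ≠ b)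
    (P : G.Walk b a) (hP : P.IsPath) (hu : u ∉ P.support) :
    Biconnected G u a := by
  refine ⟨ha.ne, Path.singleton ha, ⟨Walk.cons hb P, hP.cons hu⟩, ?_, ?_⟩
  · intro h
    have hbmem : b ∈ (Path.singleton ha).1.support := by
      rw [h]
      simp [Walk.support_cons]
    simp [Path.singleton, Walk.support_cons] at hbmem
    rcases hbmem with h1 | h1
    · exact hb.ne h1.symm
    · exact hab h1.symm
  · intro v hv _
    simpa [Path.singleton, Walk.support_cons] using hv

/-- Let `G` be a simple graph and let `u` be a vertex with neighbors `x`, `y`, `z`.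
(a) If `x ≠ y` and `x` and `y` are biconnected in `G`, then `u` and `x` are biconnected
in `G`, and `u` and `y` are biconnected in `G`.
(b) If `x` and `y` are biconnected in `G` and `y` and `z` are biconnected in `G`, then
`x = z` or `x` and `z` are biconnected in `G`. -/
theorem biconnected_neighbors {V : Type*} (G : SimpleGraph V) (u x y z : V)
    (hx : G.Adj u x) (hy : G.Adj u y) (hz : G.Adj u z) :
    ((x ≠ y ∧ Biconnected G x y) → (Biconnected G u x ∧ Biconnected G u y)) ∧
    ((Biconnected G x y ∧ Biconnected G y z) → (x = z ∨ Biconnected G x z)) := by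
  classical
  have hux := hx.ne
  have huy := hy.ne
  have huz := hz.ne
  constructor
  · rintro ⟨hxy, -, p, q, hpq, hcommon⟩
    obtain ⟨P, hP, hu⟩ : ∃ P : G.Walk x y, P.IsPath ∧ u ∉ P.support := by
      by_cases h : u ∈ p.1.support
      · refine ⟨q.1, q.2, fun h' => ?_⟩
        rcases hcommon u h h' with h'' | h''
        · exact hux h''
        · exact huy h''
      · exact ⟨p.1, p.2, h⟩
    constructor
    · refine bicon_aux hx hy hxy P.reverse hP.reverse ?_
      simpa [Walk.support_reverse] using hu
    · exact bicon_aux hy hx hxy.symm P hP hu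
  · rintro ⟨⟨hxy, p, q, hpq, hcp⟩, ⟨hyz, r, s, hrs, hcr⟩⟩
    by_cases hxz : x = z
    · exact Or.inl hxz
    right
    obtain ⟨P, hPp, huP⟩ : ∃ P : G.Walk x y, P.IsPath ∧ u ∉ P.support := by
      by_cases h : u ∈ p.1.support
      · refine ⟨q.1, q.2, fun h' => ?_⟩
        rcases hcp u h h' with h'' | h''
        · exact hux h''
        · exact huy h''
      · exact ⟨p.1, p.2, h⟩
    obtain ⟨Q, hQp, huQ⟩ : ∃ Q : G.Walk y z, Q.IsPath ∧ u ∉ Q.support := by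
      by_cases h : u ∈ r.1.support
      · refine ⟨s.1, s.2, fun h' => ?_⟩
        rcases hcr u h h' with h'' | h''
        · exact huy h''
        · exact huz h''
      · exact ⟨r.1, r.2, h⟩
    set W : G.Path x z := (P.append Q).toPath with hW
    have huW : u ∉ W.1.support := by
      intro h
      have h2 : u ∈ (P.append Q).support := Walk.support_bypass_subset _ h
      rw [Walk.support_append] at h2
      rcases List.mem_append.mp h2 with h3 | h3
      · exact huP h3
      · exact huQ (List.mem_of_mem_tail h3)
    have hT : (Walk.cons hx.symm (Walk.cons hz Walk.nil) : G.Walk x z).IsPath := by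
      simp [Walk.isPath_def, Walk.support_cons]
      exact ⟨⟨hux.symm, hxz⟩, huz⟩
    refine ⟨hxz, ⟨Walk.cons hx.symm (Walk.cons hz Walk.nil), hT⟩, W, ?_, ?_⟩
    · intro h
      apply huW
      rw [← h]
      simp [Walk.support_cons]
    · intro v hv hvW
      simp [Walk.support_cons] at hv
      rcases hv with rfl | rfl | rfl
      · exact Or.inl rfl
      · exact absurd hvW huW
      · exact Or.inr rfl
end

section
/- Let G be a simple graph with spanning forest F. Then an adjacent pair (xy, yz) of edges of G at a vertex y is transitively covered if and only if x and z are biconnected in G. -/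
/-- An *adjacent pair* at a vertex `y`: a pair of distinct edges of `G` both incident
to `y`. -/
def IsAdjPair {V : Type*} (G : SimpleGraph V) (y : V) (e₁ e₂ : Sym2 V) : Prop :=
  e₁ ≠ e₂ ∧ e₁ ∈ G.edgeSet ∧ e₂ ∈ G.edgeSet ∧ y ∈ e₁ ∧ y ∈ e₂

/-- A non-tree edge `f = pq` *covers* the pair `(e₁, e₂)` if both `e₁` and `e₂` are edges
of the fundamental cycle of `f`, i.e. each is `f` itself or an edge of the (unique, since
`F` is acyclic) `F`-path from `p` to `q`. -/
def Covers {V : Type*} (G F : SimpleGraph V) (f e₁ e₂ : Sym2 V) : Prop :=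
  ∃ (p q : V) (P : F.Path p q), f = s(p, q) ∧ G.Adj p q ∧ ¬ F.Adj p q ∧
    (e₁ = f ∨ e₁ ∈ P.1.edges) ∧ (e₂ = f ∨ e₂ ∈ P.1.edges)

/-- The relation *transitively covered* on adjacent pairs at `y`: the smallest symmetric
relation containing every adjacent pair at `y` covered by some non-tree edge, and closed
under transitivity through a common edge (for distinct extremes). -/
inductive TransCovered {V : Type*} (G F : SimpleGraph V) (y : V) :
    Sym2 V → Sym2 V → Prop
  | base {e₁ e₂ f : Sym2 V} :
      IsAdjPair G y e₁ e₂ → Covers G F f e₁ e₂ → TransCovered G F y e₁ e₂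
  | symm {e₁ e₂ : Sym2 V} : TransCovered G F y e₁ e₂ → TransCovered G F y e₂ e₁
  | trans {e₁ e₂ e₃ : Sym2 V} : TransCovered G F y e₁ e₂ → TransCovered G F y e₂ e₃ →
      e₁ ≠ e₃ → TransCovered G F y e₁ e₃

/-!
A covered pair at `y` lies on a fundamental cycle, so the other ends of its two edges are joined by
a walk avoiding `y`; such walks concatenate along the transitive closure, and a walk from `x` to `z`
avoiding `y` together with `x y z` gives two internally disjoint paths.

Conversely, two internally disjoint paths give a walk from `x` to `z` avoiding `y`. Label each
vertex `v` of the tree of `y` by the last vertex before `y` on the forest path from `v` to `y`.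
Labels agree across tree edges avoiding `y`; across a non-tree edge `uv` they agree if its
fundamental cycle avoids `y`, and otherwise that cycle passes through `y` along the two labelled
edges, which it therefore covers. Following the walk chains `xy` to the labelled edge of `x`, on to
the labelled edge of `z`, and to `zy`.
-/

section

open SimpleGraph Walk

variable {V : Type*} {G F : SimpleGraph V} {y : V}

lemma SimpleGraph.Walk.IsPath.end_notMem_support_dropLast {u v : V} {p : G.Walk u v}
    (hp : p.IsPath) (hnil : ¬p.Nil) : v ∉ p.dropLast.support :=
  ((concat_isPath_iff (p.adj_penultimate hnil)).mp (by rwa [concat_dropLast])).2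

lemma SimpleGraph.Walk.IsCycle.exists_walk_avoiding_of_mem_edges {c : G.Walk y y} (hc : c.IsCycle)
    {a b : V} (ha : s(y, a) ∈ c.edges) (hb : s(y, b) ∈ c.edges) (hab : a ≠ b) :
    ∃ W : G.Walk a b, y ∉ W.support := by
  cases c with
  | nil => exact absurd hc not_isCycle_nil
  | @cons _ w _ h q =>
    have hq : q.IsPath := ((cons_isCycle_iff q h).mp hc).1
    have hW := hq.end_notMem_support_dropLast (not_nil_of_ne h.ne')
    have hends : ∀ {v}, s(y, v) ∈ (cons h q).edges → v = w ∨ v = q.penultimate := by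
      intro v hv
      rcases List.mem_cons.mp hv with hv | hv
      · exact Or.inl (Sym2.congr_right.mp hv)
      · exact Or.inr (hq.eq_penultimate_of_mem_edges hv)
    rcases hends ha with rfl | rfl <;> rcases hends hb with rfl | rfl
    · exact absurd rfl hab
    · exact ⟨q.dropLast, hW⟩
    · exact ⟨q.dropLast.reverse, by rwa [support_reverse, List.mem_reverse]⟩
    · exact absurd rfl hab

lemma Covers.exists_walk_avoiding (hFG : F ≤ G) {f : Sym2 V} {a b : V}
    (h : Covers G F f s(a, y) s(b, y)) (hab : a ≠ b) : ∃ W : G.Walk a b, y ∉ W.support := by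
  classical
  obtain ⟨p, q, P, rfl, hGpq, hFpq, ha, hb⟩ := h
  let C : G.Walk q q := cons hGpq.symm (P.1.mapLe hFG)
  have hC : C.IsCycle := Path.cons_isCycle ⟨_, P.2.mapLe hFG⟩ _ fun hqp =>
    hFpq (P.1.adj_of_mem_edges (by simpa [edges_mapLe_eq_edges] using hqp)).symm
  have hmem : ∀ e, e = s(p, q) ∨ e ∈ P.1.edges → e ∈ C.edges := by
    rintro e (rfl | he)
    · simp [C, Sym2.eq_swap]
    · simp [C, he]
  have hy : y ∈ C.support := C.snd_mem_support_of_mem_edges (hmem _ ha)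
  have hrot : ∀ {v}, s(v, y) ∈ C.edges → s(y, v) ∈ (C.rotate y hy).edges := fun h =>
    (rotate_edges C y hy).perm.mem_iff.mpr (Sym2.eq_swap ▸ h)
  exact (hC.rotate hy).exists_walk_avoiding_of_mem_edges (hrot (hmem _ ha)) (hrot (hmem _ hb)) hab

lemma TransCovered.isAdjPair {e₁ e₂ : Sym2 V} (h : TransCovered G F y e₁ e₂) :
    IsAdjPair G y e₁ e₂ := by
  induction h with
  | base hpair _ => exact hpair
  | symm _ ih => exact ⟨ih.1.symm, ih.2.2.1, ih.2.1, ih.2.2.2.2, ih.2.2.2.1⟩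
  | trans _ _ h₁₃ ih₁ ih₂ => exact ⟨h₁₃, ih₁.2.1, ih₂.2.2.1, ih₁.2.2.2.1, ih₂.2.2.2.2⟩

lemma TransCovered.exists_walk_avoiding (hFG : F ≤ G) {a b : V}
    (h : TransCovered G F y s(a, y) s(b, y)) : ∃ W : G.Walk a b, y ∉ W.support := by
  suffices ∀ {e₁ e₂}, TransCovered G F y e₁ e₂ → ∀ {a b : V}, e₁ = s(a, y) → e₂ = s(b, y) →
      ∃ W : G.Walk a b, y ∉ W.support from this h rfl rfl
  intro e₁ e₂ h
  induction h with
  | base hpair hcov =>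
    rintro a b rfl rfl
    exact hcov.exists_walk_avoiding hFG (mt (congrArg (s(·, y))) hpair.1)
  | symm _ ih =>
    intro a b h₁ h₂
    obtain ⟨W, hW⟩ := ih h₂ h₁
    exact ⟨W.reverse, by simpa using hW⟩
  | trans h₁₂ _ _ ih₁ ih₂ =>
    intro a b h₁ h₃
    obtain ⟨c, hc⟩ := Sym2.mem_iff_exists.mp h₁₂.isAdjPair.2.2.2.2
    obtain ⟨W₁, hW₁⟩ := ih₁ h₁ (hc.trans Sym2.eq_swap)
    obtain ⟨W₂, hW₂⟩ := ih₂ (hc.trans Sym2.eq_swap) h₃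
    exact ⟨W₁.append W₂, by simp [hW₁, hW₂]⟩

lemma biconnected_of_walk_avoiding {x z : V} (hxy : G.Adj x y) (hyz : G.Adj y z) (hxz : x ≠ z)
    (W : G.Walk x z) (hW : y ∉ W.support) : Biconnected G x z := by
  classical
  have hWy : y ∉ W.bypass.support := fun h => hW (W.support_bypass_subset_support h)
  refine ⟨hxz, ⟨W.bypass, W.bypass_isPath⟩, ⟨_, (hyz.isPath_toWalk.cons ?_ (h := hxy))⟩, ?_, ?_⟩
  · simp [hxy.ne, hxz]
  · intro h
    exact hWy (by rw [Subtype.mk.inj h]; simp)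
  · intro v hv hv'
    simp only [support_cons, Adj.toWalk, support_nil, List.mem_cons] at hv'
    grind

lemma Biconnected.exists_walk_avoiding {x z : V} (h : Biconnected G x z) (hyx : y ≠ x)
    (hyz : y ≠ z) : ∃ W : G.Walk x z, y ∉ W.support := by
  obtain ⟨-, p, q, -, hpq⟩ := h
  by_cases hy : y ∈ p.1.support
  · exact ⟨q.1, fun hy' => (hpq y hy hy').elim hyx hyz⟩
  · exact ⟨p.1, hy⟩

def TransCoveredOrEq (G F : SimpleGraph V) (y a b : V) : Prop :=
  a = b ∨ TransCovered G F y s(a, y) s(b, y)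

lemma TransCoveredOrEq.symm {a b : V} (h : TransCoveredOrEq G F y a b) :
    TransCoveredOrEq G F y b a :=
  h.imp Eq.symm TransCovered.symm

lemma TransCoveredOrEq.trans {a b c : V} (hab : TransCoveredOrEq G F y a b)
    (hbc : TransCoveredOrEq G F y b c) : TransCoveredOrEq G F y a c := by
  rcases hab with rfl | hab
  · exact hbc
  rcases hbc with rfl | hbc
  · exact Or.inr hab
  by_cases hac : a = c
  · exact Or.inl hac
  · exact Or.inr (hab.trans hbc (mt Sym2.congr_left.mp hac))

open Classical in
noncomputable def treePenultimate (F : SimpleGraph V) (y v : V) : V :=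
  if h : Nonempty (F.Path v y) then h.some.1.penultimate else v

lemma treePenultimate_eq (hacyc : F.IsAcyclic) {v c : V} {P : F.Walk v y} (hP : P.IsPath)
    (hc : s(c, y) ∈ P.edges) : treePenultimate F y v = c := by
  have hpath : Nonempty (F.Path v y) := ⟨⟨P, hP⟩⟩
  rw [treePenultimate, dif_pos hpath, (hacyc.subsingleton_path v y).elim hpath.some ⟨P, hP⟩]
  exact (hP.eq_penultimate_of_mem_edges (Sym2.eq_swap ▸ hc)).symm

lemma treePenultimate_eq_of_adj (hacyc : F.IsAcyclic) {u v : V} (hadj : F.Adj u v)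
    (hu : u ≠ y) (hv : v ≠ y) (hreach : F.Reachable u y) :
    treePenultimate F y v = treePenultimate F y u := by
  obtain ⟨P, hP⟩ := hreach.exists_isPath
  by_cases hvP : v ∈ P.support
  · obtain ⟨P₁, P₂, -, hP₂, rfl⟩ := hP.mem_support_iff_exists_append.mp hvP
    have hmem := P₂.mk_penultimate_end_mem_edges (not_nil_of_ne hv)
    rw [treePenultimate_eq hacyc hP₂ hmem, treePenultimate_eq hacyc hP (c := P₂.penultimate)
      (by rw [edges_append]; exact List.mem_append_right _ hmem)]
  · have hmem := P.mk_penultimate_end_mem_edges (not_nil_of_ne hu)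
    rw [treePenultimate_eq hacyc (hP.cons hvP (h := hadj.symm)) (List.mem_cons_of_mem _ hmem),
      treePenultimate_eq hacyc hP hmem]

lemma treePenultimate_eq_of_walk (hacyc : F.IsAcyclic) {u v : V} (W : F.Walk u v)
    (hW : y ∉ W.support) (hreach : F.Reachable u y) :
    treePenultimate F y v = treePenultimate F y u := by
  induction W with
  | nil => rfl
  | cons hadj W ih =>
    simp only [support_cons, List.mem_cons, not_or] at hW
    rw [ih hW.2 (hadj.symm.reachable.trans hreach),
      treePenultimate_eq_of_adj hacyc hadj (Ne.symm hW.1) (fun h => hW.2 (h ▸ W.start_mem_support))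
        hreach]

lemma transCoveredOrEq_treePenultimate_of_adj (hFG : F ≤ G) (hacyc : F.IsAcyclic)
    (hspan : ∀ a b : V, G.Reachable a b → F.Reachable a b) {u v : V} (hadj : G.Adj u v)
    (hu : u ≠ y) (hv : v ≠ y) (hreach : F.Reachable u y) :
    TransCoveredOrEq G F y (treePenultimate F y u) (treePenultimate F y v) := by
  by_cases hF : F.Adj u v
  · exact Or.inl (treePenultimate_eq_of_adj hacyc hF hu hv hreach).symm
  obtain ⟨P, hP⟩ := (hspan u v hadj.reachable).exists_isPath
  by_cases hyP : y ∉ P.support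
  · exact Or.inl (treePenultimate_eq_of_walk hacyc P hyP hreach).symm
  obtain ⟨P₁, P₂, hP₁, hP₂, rfl⟩ := hP.mem_support_iff_exists_append.mp (not_not.mp hyP)
  have hc := P₁.mk_penultimate_end_mem_edges (not_nil_of_ne hu)
  have hd := P₂.reverse.mk_penultimate_end_mem_edges (not_nil_of_ne hv)
  rw [treePenultimate_eq hacyc hP₁ hc, treePenultimate_eq hacyc hP₂.reverse hd]
  rw [edges_reverse, List.mem_reverse] at hd
  have hcd : s(P₁.penultimate, y) ≠ s(P₂.reverse.penultimate, y) := fun h =>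
    List.disjoint_of_nodup_append (edges_append P₁ P₂ ▸ hP.isTrail.edges_nodup) hc (h ▸ hd)
  refine Or.inr (.base ⟨hcd, ?_, ?_, Sym2.mem_mk_right _ _, Sym2.mem_mk_right _ _⟩
    ⟨u, v, ⟨_, hP⟩, rfl, hadj, hF, Or.inr (by rw [edges_append]; exact List.mem_append_left _ hc),
      Or.inr (by rw [edges_append]; exact List.mem_append_right _ hd)⟩)
  · exact edgeSet_mono hFG (P₁.edges_subset_edgeSet hc)
  · exact edgeSet_mono hFG (P₂.edges_subset_edgeSet hd)

lemma transCoveredOrEq_treePenultimate_of_walk (hFG : F ≤ G) (hacyc : F.IsAcyclic)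
    (hspan : ∀ a b : V, G.Reachable a b → F.Reachable a b) {u v : V} (W : G.Walk u v)
    (hW : y ∉ W.support) (hreach : F.Reachable u y) :
    TransCoveredOrEq G F y (treePenultimate F y u) (treePenultimate F y v) := by
  induction W with
  | nil => exact Or.inl rfl
  | cons hadj W ih =>
    simp only [support_cons, List.mem_cons, not_or] at hW
    exact (transCoveredOrEq_treePenultimate_of_adj hFG hacyc hspan hadj (Ne.symm hW.1)
      (fun h => hW.2 (h ▸ W.start_mem_support)) hreach).trans
      (ih hW.2 ((hspan _ _ hadj.symm.reachable).trans hreach))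

lemma transCoveredOrEq_treePenultimate (hFG : F ≤ G) (hacyc : F.IsAcyclic)
    (hspan : ∀ a b : V, G.Reachable a b → F.Reachable a b) {a : V} (ha : G.Adj a y) :
    TransCoveredOrEq G F y a (treePenultimate F y a) := by
  by_cases hF : F.Adj a y
  · exact Or.inl (treePenultimate_eq hacyc hF.isPath_toWalk (by simp)).symm
  obtain ⟨P, hP⟩ := (hspan a y ha.reachable).exists_isPath
  have hc := P.mk_penultimate_end_mem_edges (not_nil_of_ne ha.ne)
  rw [treePenultimate_eq hacyc hP hc]
  have hca : P.penultimate ≠ a := fun h => hF (h ▸ P.adj_penultimate (not_nil_of_ne ha.ne))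
  exact Or.inr (.base ⟨mt Sym2.congr_left.mp hca.symm, ha, hFG (P.adj_of_mem_edges hc),
    Sym2.mem_mk_right _ _, Sym2.mem_mk_right _ _⟩
    ⟨a, y, ⟨P, hP⟩, rfl, ha, hF, Or.inl rfl, Or.inr hc⟩)

lemma transCoveredOrEq_of_walk_avoiding (hFG : F ≤ G) (hacyc : F.IsAcyclic)
    (hspan : ∀ a b : V, G.Reachable a b → F.Reachable a b) {a b : V} (ha : G.Adj a y)
    (hb : G.Adj b y) (W : G.Walk a b) (hW : y ∉ W.support) : TransCoveredOrEq G F y a b :=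
  ((transCoveredOrEq_treePenultimate hFG hacyc hspan ha).trans
    (transCoveredOrEq_treePenultimate_of_walk hFG hacyc hspan W hW
      (hspan a y ha.reachable))).trans (transCoveredOrEq_treePenultimate hFG hacyc hspan hb).symm

end

theorem transCovered_iff_biconnected_general {V : Type*} (G F : SimpleGraph V)
    (hFG : F ≤ G) (hacyc : F.IsAcyclic)
    (hspan : ∀ a b : V, F.Reachable a b ↔ G.Reachable a b)
    (x y z : V) (hxy : G.Adj x y) (hyz : G.Adj y z) :
    TransCovered G F y s(x, y) s(y, z) ↔ Biconnected G x z := by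
  rw [show s(y, z) = s(z, y) from Sym2.eq_swap]
  constructor
  · intro h
    obtain ⟨W, hW⟩ := h.exists_walk_avoiding hFG
    exact biconnected_of_walk_avoiding hxy hyz (mt (congrArg (s(·, y))) h.isAdjPair.1) W hW
  · intro h
    obtain ⟨W, hW⟩ := h.exists_walk_avoiding hxy.ne' hyz.ne
    have hspan' : ∀ a b, G.Reachable a b → F.Reachable a b := fun a b => (hspan a b).2
    exact (transCoveredOrEq_of_walk_avoiding hFG hacyc hspan' hxy hyz.symm W hW).resolve_left h.1

/-- Let `G` be a simple graph with spanning forest `F`. Then an adjacent pair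
`(xy, yz)` of edges of `G` at a vertex `y` is transitively covered if and only if
`x` and `z` are biconnected in `G`. -/
theorem transCovered_iff_biconnected {V : Type*} (G F : SimpleGraph V)
    (hFG : F ≤ G) (hacyc : F.IsAcyclic)
    (hspan : ∀ a b : V, F.Reachable a b ↔ G.Reachable a b)
    (x y z : V) (hxy : G.Adj x y) (hyz : G.Adj y z)
    (hne : s(x, y) ≠ s(y, z)) :
    TransCovered G F y s(x, y) s(y, z) ↔ Biconnected G x z :=
  transCovered_iff_biconnected_general G F hFG hacyc hspan x y z hxy hyz
end

section
/- Let G be a simple graph, let u and v be vertices that are biconnected in G, and let P be any path from u to v in G. Then every two distinct vertices lying on P are biconnected in G. -/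
open SimpleGraph

section

variable {V : Type*} {G : SimpleGraph V}

namespace SimpleGraph

namespace Walk

theorem IsPath.eq_of_mem_takeUntil_of_mem_dropUntil [DecidableEq V] {s t z y : V}
    {R : G.Walk s t} (hR : R.IsPath) (hz : z ∈ R.support)
    (h₁ : y ∈ (R.takeUntil z hz).support) (h₂ : y ∈ (R.dropUntil z hz).support) : y = z := by
  by_contra hyz
  rw [← R.take_spec hz] at hR
  exact hR.ne_of_mem_support_of_append hyz h₁ h₂ rfl

theorem IsPath.exists_walk_to_start_or_end {s t z w : V} {R : G.Walk s t}
    (hR : R.IsPath) (hz : z ∈ R.support) (hzw : z ≠ w) :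
    (∃ W : G.Walk z s, w ∉ W.support ∧ ∀ y ∈ W.support, y ∈ R.support) ∨
      (∃ W : G.Walk z t, w ∉ W.support ∧ ∀ y ∈ W.support, y ∈ R.support) := by
  classical
  by_cases hw : w ∈ (R.takeUntil z hz).support
  · refine .inr ⟨R.dropUntil z hz, fun hw' => hzw ?_,
      fun y => (R.support_dropUntil_subset_support hz ·)⟩
    exact (hR.eq_of_mem_takeUntil_of_mem_dropUntil hz hw hw').symm
  · refine .inl ⟨(R.takeUntil z hz).reverse, by simpa using hw, fun y hy => ?_⟩
    exact R.support_takeUntil_subset_support hz (by simpa using hy)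

theorem exists_walk_to_first_mem {C : Set V} {b a : V} (W : G.Walk b a) (ha : a ∈ C) :
    ∃ x ∈ C, ∃ Q : G.Walk b x, (∀ y ∈ Q.support, y ∈ W.support) ∧
      ∀ y ∈ Q.support, y ∈ C → y = x := by
  induction W with
  | nil => exact ⟨_, ha, nil, by simp, by simp⟩
  | @cons b c a hbc W ih =>
    by_cases hb : b ∈ C
    · exact ⟨b, hb, nil, by simp, by simp⟩
    obtain ⟨x, hx, Q, hQW, hQC⟩ := ih ha
    refine ⟨x, hx, cons hbc Q, ?_, ?_⟩
    · simp only [support_cons, List.mem_cons, forall_eq_or_imp, true_or, true_and]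
      exact fun y hy => .inr (hQW y hy)
    · simp only [support_cons, List.mem_cons, forall_eq_or_imp]
      exact ⟨fun h => absurd h hb, hQC⟩

end Walk

theorem Reachable.exists_walk_of_induce {T : Set V} {x y : T}
    (h : (G.induce T).Reachable x y) : ∃ W : G.Walk x y, ∀ z ∈ W.support, z ∈ T := by
  obtain ⟨W⟩ := h
  have hW : ∀ z ∈ (W.map (Embedding.induce T).toHom).support, z ∈ T := by
    simp only [Walk.support_map, List.mem_map]
    rintro _ ⟨z, -, rfl⟩
    exact z.2
  exact ⟨_, hW⟩

theorem preconnected_induce_diff_singleton {S : Set V} {u v : V}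
    (hpath : ∀ z ∈ S, ∃ R : G.Walk u v, R.IsPath ∧ z ∈ R.support ∧ ∀ y ∈ R.support, y ∈ S)
    (hjoin : ∀ w, w ≠ u → w ≠ v → ∃ R : G.Walk u v, w ∉ R.support ∧ ∀ y ∈ R.support, y ∈ S)
    (w : V) : (G.induce (S \ {w})).Preconnected := by
  have reach : ∀ {x y : V} (W : G.Walk x y), w ∉ W.support → (∀ z ∈ W.support, z ∈ S) →
      ∀ hx hy, (G.induce (S \ {w})).Reachable ⟨x, hx⟩ ⟨y, hy⟩ := fun W hwW hWS _ _ =>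
    ⟨W.induce _ fun z hz => Set.mem_sdiff_singleton.2 ⟨hWS z hz, by rintro rfl; exact hwW hz⟩⟩
  have to_end : ∀ z : ↥(S \ {w}),
      (∃ hu, (G.induce (S \ {w})).Reachable z ⟨u, hu⟩) ∨
        ∃ hv, (G.induce (S \ {w})).Reachable z ⟨v, hv⟩ := by
    rintro ⟨z, hzS, hzw⟩
    obtain ⟨R, hR, hz, hRS⟩ := hpath z hzS
    rcases hR.exists_walk_to_start_or_end hz hzw with ⟨W, hwW, hWR⟩ | ⟨W, hwW, hWR⟩
    · have hu : u ∈ S \ {w} :=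
        Set.mem_sdiff_singleton.2 ⟨hRS u R.start_mem_support, fun h => hwW (h ▸ W.end_mem_support)⟩
      exact .inl ⟨hu, reach W hwW (fun y hy => hRS y (hWR y hy)) _ _⟩
    · have hv : v ∈ S \ {w} :=
        Set.mem_sdiff_singleton.2 ⟨hRS v R.end_mem_support, fun h => hwW (h ▸ W.end_mem_support)⟩
      exact .inr ⟨hv, reach W hwW (fun y hy => hRS y (hWR y hy)) _ _⟩
  have join (hu : u ∈ S \ {w}) (hv : v ∈ S \ {w}) :
      (G.induce (S \ {w})).Reachable ⟨u, hu⟩ ⟨v, hv⟩ := by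
    obtain ⟨R, hwR, hRS⟩ := hjoin w (fun h => hu.2 h.symm) (fun h => hv.2 h.symm)
    exact reach R hwR hRS _ _
  intro x y
  rcases to_end x with ⟨hu, hx⟩ | ⟨hv, hx⟩ <;> rcases to_end y with ⟨hu', hy⟩ | ⟨hv', hy⟩
  · exact hx.trans hy.symm
  · exact hx.trans ((join hu hv').trans hy.symm)
  · exact hx.trans ((join hu' hv).symm.trans hy.symm)
  · exact hx.trans hy.symm

end SimpleGraph

namespace Biconnected

theorem of_isPath {a b : V} {r s : G.Walk a b} (hr : r.IsPath) (hs : s.IsPath) (hab : a ≠ b)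
    (hrs : r ≠ s) (hdisj : ∀ x ∈ r.support, x ∈ s.support → x = a ∨ x = b) :
    Biconnected G a b :=
  ⟨hab, ⟨r, hr⟩, ⟨s, hs⟩, fun h => hrs (congrArg Subtype.val h), hdisj⟩

theorem symm {a b : V} (h : Biconnected G a b) : Biconnected G b a := by
  obtain ⟨hab, p, q, hpq, hdisj⟩ := h
  refine of_isPath p.2.reverse q.2.reverse hab.symm (fun h => hpq (Subtype.ext ?_)) ?_
  · simpa using congrArg Walk.reverse h
  · intro x hp hq
    simp only [Walk.support_reverse, List.mem_reverse] at hp hq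
    exact (hdisj x hp hq).symm

/-- The new cycle runs along `p` from `a` to `x`, back along `Q` to `b`, over the edge `bc`
and back along `q` to `a`. -/
theorem of_adj_of_walk_to_path {a b c x : V} {p q : G.Walk a c}
    (hp : p.IsPath) (hq : q.IsPath)
    (hpq : ∀ y, y ∈ p.support → y ∈ q.support → y = a ∨ y = c)
    (hcb : G.Adj c b) (hba : b ≠ a) (hx : x ∈ p.support) (Q : G.Walk b x) (hcQ : c ∉ Q.support)
    (hQ : ∀ y ∈ Q.support, y ∈ p.support ∨ y ∈ q.support → y = x) :
    Biconnected G a b := by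
  classical
  have hxc : x ≠ c := fun h => hcQ (h ▸ Q.end_mem_support)
  set r := (p.takeUntil x hx).append Q.reverse
  have hr_sub : ∀ y ∈ r.support, y ∈ q.support → y ∈ p.support := by
    intro y hy hyq
    rcases (Walk.mem_support_append_iff _ _).mp hy with hy | hy
    · exact p.support_takeUntil_subset_support hx hy
    · exact hQ y (by simpa using hy) (.inr hyq) ▸ hx
  have hcr : c ∉ r.support := by
    intro hc
    rcases (Walk.mem_support_append_iff _ _).mp hc with hc | hc
    · exact hxc (hp.eq_of_mem_takeUntil_of_mem_dropUntil hx hc (Walk.end_mem_support _)).symm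
    · exact hcQ (by simpa using hc)
  have hbq : b ∉ q.support := fun hbq =>
    (hpq b (hr_sub b r.end_mem_support hbq) hbq).elim hba fun h => hcr (h ▸ r.end_mem_support)
  refine of_isPath r.bypass_isPath (hq.concat hbq hcb) hba.symm
    (fun h => hcr (r.support_bypass_subset_support (h ▸ by simp))) ?_
  intro y hyr hys
  have hyr := r.support_bypass_subset_support hyr
  rcases (by simpa using hys : y ∈ q.support ∨ y = b) with hyq | rfl
  · exact (hpq y (hr_sub y hyr hyq) hyq).imp_right fun h => absurd (h ▸ hyr) hcr
  · exact .inr rfl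

theorem of_adj {a b c : V} (h : Biconnected G a c) (hcb : G.Adj c b) (hba : b ≠ a)
    (W : G.Walk b a) (hcW : c ∉ W.support) : Biconnected G a b := by
  obtain ⟨-, ⟨p, hp⟩, ⟨q, hq⟩, -, hpq⟩ := h
  obtain ⟨x, hx, Q, hQW, hQ⟩ :=
    W.exists_walk_to_first_mem (C := {y | y ∈ p.support ∨ y ∈ q.support}) (.inl p.start_mem_support)
  have hcQ : c ∉ Q.support := fun hc => hcW (hQW c hc)
  rcases hx with hx | hx
  · exact of_adj_of_walk_to_path hp hq hpq hcb hba hx Q hcQ hQ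
  · exact of_adj_of_walk_to_path hq hp (fun y hq hp => hpq y hp hq) hcb hba hx Q hcQ
      fun y hy hy' => hQ y hy hy'.symm

theorem of_reachable_induce {S : Set V} (hS : ∀ w, (G.induce (S \ {w})).Preconnected) {a : V}
    (ha : a ∈ S) {x y : ↥(S \ {a})} (hxy : (G.induce (S \ {a})).Reachable x y)
    (h : Biconnected G a x) : Biconnected G a y := by
  obtain ⟨W⟩ := hxy
  induction W with
  | nil => exact h
  | @cons x d y hxd W ih =>
    have hdx : (d : V) ≠ x := (induce_adj.mp hxd).ne.symm
    have hax : a ≠ x := fun h => x.2.2 h.symm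
    obtain ⟨R, hR⟩ := (hS x ⟨d, d.2.1, hdx⟩ ⟨a, ha, hax⟩).exists_walk_of_induce
    exact ih (h.of_adj hxd d.2.2 R fun hx => (hR x hx).2 rfl)

theorem of_mem {S : Set V} (hS : ∀ w, (G.induce (S \ {w})).Preconnected) {u v b : V}
    (h : Biconnected G u v) (hu : u ∈ S) (hv : v ∈ S) (hb : b ∈ S) (hbu : b ≠ u) :
    Biconnected G u b :=
  of_reachable_induce hS hu (x := ⟨v, hv, h.1.symm⟩) (y := ⟨b, hb, hbu⟩) (hS u _ _) h

theorem of_mem_of_mem {S : Set V} (hS : ∀ w, (G.induce (S \ {w})).Preconnected) {u v a b : V}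
    (h : Biconnected G u v) (hu : u ∈ S) (hv : v ∈ S) (ha : a ∈ S) (hb : b ∈ S) (hab : a ≠ b) :
    Biconnected G a b := by
  by_cases hbu : b = u
  · subst hbu
    exact (h.of_mem hS hu hv ha hab).symm
  · exact ((h.of_mem hS hu hv hb hbu).symm.of_mem hS hb hu ha hab).symm

end Biconnected

end

/-- Let `G` be a simple graph, let `u` and `v` be vertices that are biconnected in `G`,
and let `P` be any path from `u` to `v` in `G`. Then every two distinct vertices lying on
`P` are biconnected in `G`. -/
theorem biconnected_of_mem_path {V : Type*} (G : SimpleGraph V) (u v : V)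
    (h : Biconnected G u v) (P : G.Path u v) (a b : V)
    (ha : a ∈ P.1.support) (hb : b ∈ P.1.support) (hab : a ≠ b) :
    Biconnected G a b := by
  obtain ⟨p, q, -, hpq⟩ := h.2
  let S : Set V := {z | z ∈ p.1.support ∨ z ∈ q.1.support ∨ z ∈ P.1.support}
  have hS : ∀ w, (G.induce (S \ {w})).Preconnected := by
    refine preconnected_induce_diff_singleton (u := u) (v := v) (fun z hz => ?_) fun w hwu hwv => ?_
    · rcases hz with hz | hz | hz
      exacts [⟨p, p.2, hz, fun y => .inl⟩, ⟨q, q.2, hz, fun y => (.inr <| .inl ·)⟩,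
        ⟨P, P.2, hz, fun y => (.inr <| .inr ·)⟩]
    · by_cases hwp : w ∈ p.1.support
      · exact ⟨q, fun hwq => (hpq w hwp hwq).elim hwu hwv, fun y => (.inr <| .inl ·)⟩
      · exact ⟨p, hwp, fun y => .inl⟩
  exact h.of_mem_of_mem hS (.inl p.1.start_mem_support) (.inl p.1.end_mem_support)
    (.inr <| .inr ha) (.inr <| .inr hb) hab
end

section
/- Let n and i be natural numbers, and let S₁, …, S_c be finite sets such that |S_a ∩ S_b| ≤ 1 for all a ≠ b and |S₁ ∪ ⋯ ∪ S_c| ≤ ⌈n / 2^i⌉. Then there is at most one index j with |S_j| > ⌈n / 2^{i+1}⌉. -/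
/-! Two sets of size greater than `m = ⌈n / 2^(i+1)⌉` meeting in at most one point have a
union of at least `2m + 1 > ⌈n / 2^i⌉` elements. -/

/-- `ceilDiv2 n k = ⌈n / 2^k⌉`, the least natural number `m` with `n ≤ m * 2^k`. -/
def ceilDiv2 (n k : ℕ) : ℕ := (n + 2 ^ k - 1) / 2 ^ k

open Finset

theorem ceilDiv2_eq_ceilDiv (n k : ℕ) : ceilDiv2 n k = n ⌈/⌉ 2 ^ k := rfl

theorem ceilDiv2_le_two_mul_ceilDiv2_succ (n i : ℕ) : ceilDiv2 n i ≤ 2 * ceilDiv2 n (i + 1) := by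
  rw [ceilDiv2_eq_ceilDiv, ceilDiv_le_iff_le_mul (by positivity)]
  calc n ≤ 2 ^ (i + 1) * ceilDiv2 n (i + 1) := le_smul_ceilDiv (a := 2 ^ (i + 1)) (by positivity)
    _ = 2 ^ i * (2 * ceilDiv2 n (i + 1)) := by ring

theorem Finset.card_add_card_le_card_add_one {α : Type*} [DecidableEq α] {A B U : Finset α}
    (hA : A ⊆ U) (hB : B ⊆ U) (hAB : #(A ∩ B) ≤ 1) : #A + #B ≤ #U + 1 := by
  have hunion : #(A ∪ B) ≤ #U := card_le_card (union_subset hA hB)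
  have := card_union_add_card_inter A B
  omega

/-- Let `n` and `i` be natural numbers, and let `S₁, …, S_c` be finite sets such that
`|S_a ∩ S_b| ≤ 1` for all `a ≠ b` and `|S₁ ∪ ⋯ ∪ S_c| ≤ ⌈n / 2^i⌉`. Then there is at
most one index `j` with `|S_j| > ⌈n / 2^{i+1}⌉`. -/
theorem at_most_one_large_set {α : Type*} [DecidableEq α] (n i c : ℕ)
    (S : Fin c → Finset α)
    (hpair : ∀ a b : Fin c, a ≠ b → ((S a) ∩ (S b)).card ≤ 1)
    (hunion : (Finset.univ.biUnion S).card ≤ ceilDiv2 n i) :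
    ∀ j k : Fin c, ceilDiv2 n (i + 1) < (S j).card → ceilDiv2 n (i + 1) < (S k).card →
      j = k := by
  intro j k hj hk
  by_contra hne
  have hsum := card_add_card_le_card_add_one (subset_biUnion_of_mem S (mem_univ j))
    (subset_biUnion_of_mem S (mem_univ k)) (hpair j k hne)
  have := ceilDiv2_le_two_mul_ceilDiv2_succ n i
  omega
end

section
/- Let T be a rank-valid binary tree of rank r with total leaf weight W. Then every leaf of T of weight w lies at depth exactly r − ⌊log₂ w⌋ in T, and consequently at depth at most ⌊log₂ W⌋ − ⌊log₂ w⌋; in particular, T is a perfectly biased binary tree: each leaf of weight w has depth at most log₂(W / w) + 1. -/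
/-- A finite binary tree whose leaves carry weights. -/
inductive BTree where
  | leaf (w : ℕ) : BTree
  | node (l r : BTree) : BTree

/-- The total leaf weight of a tree. -/
def BTree.weight : BTree → ℕ
  | .leaf w => w
  | .node l r => l.weight + r.weight

/-- A tree is *rank-valid of rank `r`* if it is a leaf of (positive) weight `w` with
`r = ⌊log₂ w⌋`, or it is a node whose two subtrees are both rank-valid of rank `r − 1`. -/
inductive RankValid : BTree → ℕ → Prop
  | leaf (w : ℕ) (hw : 1 ≤ w) : RankValid (.leaf w) (Nat.log 2 w)
  | node (l r : BTree) (k : ℕ) : RankValid l k → RankValid r k →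
      RankValid (.node l r) (k + 1)

/-- `LeafAt t w d` holds if `t` has a leaf of weight `w` at depth `d`. -/
inductive LeafAt : BTree → ℕ → ℕ → Prop
  | here (w : ℕ) : LeafAt (.leaf w) w 0
  | left {l r : BTree} {w d : ℕ} : LeafAt l w d → LeafAt (.node l r) w (d + 1)
  | right {l r : BTree} {w d : ℕ} : LeafAt r w d → LeafAt (.node l r) w (d + 1)

/-! Descending one level in a rank-valid tree lowers the rank by one, so a leaf of weight `w`
sits at depth `r - ⌊log₂ w⌋`; and a rank-valid tree of rank `r` weighs at least `2 ^ r`, since a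
leaf of rank `r` does and the weight at least doubles from the children to their parent, so
`r ≤ ⌊log₂ W⌋`. The real bound follows from `⌊log₂ W⌋ - ⌊log₂ w⌋ < log₂ W - log₂ w + 1`. -/

lemma Real.logb_lt_natLog_add_one (a b : ℕ) : Real.logb b a < Nat.log b a + 1 := by
  have h := Int.lt_floor_add_one (Real.logb b a)
  rwa [Real.floor_logb_natCast (Nat.cast_nonneg a), Int.log_natCast, Int.cast_natCast] at h

lemma Real.natLog_sub_natLog_lt_logb_div_add_one {b m n : ℕ} (hm : m ≠ 0) (hn : n ≠ 0) :
    (Nat.log b m : ℝ) - Nat.log b n < Real.logb b ((m : ℝ) / n) + 1 := by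
  rw [Real.logb_div (Nat.cast_ne_zero.2 hm) (Nat.cast_ne_zero.2 hn)]
  linarith [Real.natLog_le_logb m b, Real.logb_lt_natLog_add_one n b]

namespace RankValid

variable {t : BTree} {r : ℕ}

lemma pos_of_leafAt (h : RankValid t r) {w d : ℕ} (hleaf : LeafAt t w d) : 0 < w := by
  induction hleaf generalizing r with
  | here => cases h with | leaf _ hw => exact hw
  | left _ ih => cases h with | node _ _ _ hl _ => exact ih hl
  | right _ ih => cases h with | node _ _ _ _ hr => exact ih hr

lemma log_add_depth_of_leafAt (h : RankValid t r) {w d : ℕ} (hleaf : LeafAt t w d) :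
    Nat.log 2 w + d = r := by
  induction hleaf generalizing r with
  | here => cases h; rfl
  | left _ ih => cases h with | node _ _ _ hl _ => rw [← ih hl]; rfl
  | right _ ih => cases h with | node _ _ _ _ hr => rw [← ih hr]; rfl

lemma two_pow_le_weight (h : RankValid t r) : 2 ^ r ≤ t.weight := by
  induction h with
  | leaf w hw => exact Nat.pow_log_le_self 2 (Nat.one_le_iff_ne_zero.1 hw)
  | node l r k _ _ ihl ihr =>
    rw [pow_succ, mul_two]
    exact Nat.add_le_add ihl ihr

lemma weight_ne_zero (h : RankValid t r) : t.weight ≠ 0 :=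
  (Nat.two_pow_pos r).trans_le h.two_pow_le_weight |>.ne'

lemma le_log_weight (h : RankValid t r) : r ≤ Nat.log 2 t.weight :=
  Nat.le_log_of_pow_le one_lt_two h.two_pow_le_weight

end RankValid

/-- Let `T` be a rank-valid binary tree of rank `r` with total leaf weight `W`. Then
every leaf of `T` of weight `w` lies at depth exactly `r − ⌊log₂ w⌋` in `T`, and
consequently at depth at most `⌊log₂ W⌋ − ⌊log₂ w⌋`; in particular, `T` is a perfectly
biased binary tree: each leaf of weight `w` has depth at most `log₂(W / w) + 1`. -/
theorem depth_of_rankValid (t : BTree) (r : ℕ) (h : RankValid t r)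
    (w d : ℕ) (hleaf : LeafAt t w d) :
    d = r - Nat.log 2 w ∧
    d ≤ Nat.log 2 t.weight - Nat.log 2 w ∧
    (d : ℝ) ≤ Real.logb 2 ((t.weight : ℝ) / (w : ℝ)) + 1 := by
  have hdepth := h.log_add_depth_of_leafAt hleaf
  have hrank := h.le_log_weight
  refine ⟨by omega, by omega, ?_⟩
  have hlog : (d : ℝ) + Nat.log 2 w ≤ Nat.log 2 t.weight := mod_cast (by omega)
  have hreal := Real.natLog_sub_natLog_lt_logb_div_add_one (b := 2) h.weight_ne_zero
    (h.pos_of_leafAt hleaf).ne'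
  push_cast at hreal
  linarith
end

section
/- Let V be a finite set, r ∈ V, and par : V → V a parent function with par(r) = r, par(v) ≠ v for v ≠ r, and such that every v reaches r by iterating par; say u is an ancestor of v if u = par^[n](v) for some n ≥ 0. Let w : V → ℕ assign a positive weight to every vertex, and let W(v) be the sum of w(u) over all u having v as an ancestor. Fix two vertices s₁, s₂ ∈ V. Call a non-root vertex c with parent p = par(c) heavy if: c is an ancestor of s₁; or c is an ancestor of s₂ and p is not an ancestor of s₁; or p is an ancestor of neither s₁ nor s₂ and W(p) < 2·W(c). Call c light otherwise. Then for every vertex v, the number of light vertices among v, par(v), par(par(v)), …, excluding the root r, is at most ⌊log₂(W(r) / W(v))⌋ + 2. -/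
/-- `u` is an ancestor of `v` (including `u = v`) if `u` is obtained from `v` by
iterating the parent function finitely many times. -/
def Ancestor {V : Type*} (par : V → V) (u v : V) : Prop :=
  ∃ n : ℕ, par^[n] v = u

open scoped Classical in
/-- `Wt par w v` is the sum of `w u` over all `u` having `v` as an ancestor
(the weight of the subtree rooted at `v`). -/
noncomputable def Wt {V : Type*} [Fintype V] (par : V → V) (w : V → ℕ) (v : V) : ℕ :=
  ∑ u : V, if Ancestor par v u then w u else 0

/-- A non-root vertex `c` with parent `p = par c` is *heavy* (for the selected vertices
`s₁` and `s₂`) if: `c` is an ancestor of `s₁`; or `c` is an ancestor of `s₂` and `p` is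
not an ancestor of `s₁`; or `p` is an ancestor of neither `s₁` nor `s₂` and
`W(p) < 2·W(c)`. -/
noncomputable def Heavy {V : Type*} [Fintype V] (par : V → V) (w : V → ℕ)
    (s₁ s₂ c : V) : Prop :=
  Ancestor par c s₁ ∨
  (Ancestor par c s₂ ∧ ¬ Ancestor par (par c) s₁) ∨
  (¬ Ancestor par (par c) s₁ ∧ ¬ Ancestor par (par c) s₂ ∧
    Wt par w (par c) < 2 * Wt par w c)

/-!
Follow the path `v, par v, par (par v), …` up to the root. A light vertex `c` on it falls into
one of three cases: the path enters the ancestors of `s₁` at `par c`, or it enters the ancestors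
of `s₂` there, or the subtree weight at least doubles from `c` to `par c`. Since the set of
ancestors of `sᵢ` is closed under `par`, the path enters it at most once; and since subtree
weights never decrease along the path and grow from `W(v)` to `W(r)`, there are at most
`log₂(W(r) / W(v))` doubling steps.
-/

open Finset

lemma Ancestor.par_left {V : Type*} {par : V → V} {u x : V} (h : Ancestor par u x) :
    Ancestor par (par u) x := by
  obtain ⟨k, rfl⟩ := h
  exact ⟨k + 1, Function.iterate_succ_apply' par k x⟩

lemma Ancestor.monotone_iterate {V : Type*} (par : V → V) (v s : V) :
    Monotone fun n => Ancestor par (par^[n] v) s :=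
  monotone_nat_of_le_succ fun n h => by
    simpa only [Function.iterate_succ_apply'] using h.par_left

section Weight

variable {V : Type*} [Fintype V] (par : V → V) (w : V → ℕ)

lemma Wt_le_Wt_par (u : V) : Wt par w u ≤ Wt par w (par u) := by
  classical
  refine sum_le_sum fun x _ => ?_
  by_cases h : Ancestor par u x
  · simp [h, h.par_left]
  · simp [h]

lemma Wt_monotone_iterate (v : V) : Monotone fun n => Wt par w (par^[n] v) :=
  monotone_nat_of_le_succ fun n => by
    simpa only [Function.iterate_succ_apply'] using Wt_le_Wt_par par w _

lemma le_Wt (u : V) : w u ≤ Wt par w u := by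
  classical
  calc w u = if Ancestor par u u then w u else 0 := (if_pos ⟨0, rfl⟩).symm
    _ ≤ Wt par w u := single_le_sum (f := fun x => if Ancestor par u x then w x else 0)
      (fun _ _ => Nat.zero_le _) (mem_univ u)

lemma not_heavy_cases {s₁ s₂ c : V} (h : ¬ Heavy par w s₁ s₂ c) :
    2 * Wt par w c ≤ Wt par w (par c) ∨
      (¬ Ancestor par c s₁ ∧ Ancestor par (par c) s₁) ∨
      (¬ Ancestor par c s₂ ∧ Ancestor par (par c) s₂) := by
  unfold Heavy at h
  push Not at h
  tauto

end Weight

lemma card_filter_not_and_succ_le_one {P : ℕ → Prop} [DecidablePred P] (hP : Monotone P)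
    (s : Finset ℕ) : #{n ∈ s | ¬ P n ∧ P (n + 1)} ≤ 1 := by
  refine card_le_one.2 fun a ha b hb => ?_
  simp only [mem_filter] at ha hb
  by_contra hne
  rcases Nat.lt_or_gt_of_ne hne with hab | hba
  · exact hb.2.1 (hP hab ha.2.2)
  · exact ha.2.1 (hP hba hb.2.2)

lemma two_pow_card_filter_doubling_mul_le {g : ℕ → ℕ} (hg : Monotone g) (N : ℕ) :
    2 ^ #{n ∈ range N | 2 * g n ≤ g (n + 1)} * g 0 ≤ g N := by
  induction N with
  | zero => simp
  | succ N ih =>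
    rw [range_add_one, filter_insert]
    split_ifs with hN
    · rw [card_insert_of_notMem (by simp), pow_succ']
      calc 2 * 2 ^ #{n ∈ range N | 2 * g n ≤ g (n + 1)} * g 0
          ≤ 2 * g N := by rw [mul_assoc]; exact Nat.mul_le_mul_left 2 ih
        _ ≤ g (N + 1) := hN
    · exact ih.trans (hg N.le_succ)

lemma card_filter_doubling_le_log {g : ℕ → ℕ} (hg : Monotone g) (h0 : 0 < g 0) (N : ℕ) :
    #{n ∈ range N | 2 * g n ≤ g (n + 1)} ≤ Nat.log 2 (g N / g 0) :=
  Nat.le_log_of_pow_le one_lt_two <|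
    (Nat.le_div_iff_mul_le h0).2 (two_pow_card_filter_doubling_mul_le hg N)

lemma ncard_ancestor_ne_root_le {V : Type*} {par : V → V} {r v : V} (hroot : par r = r)
    {N : ℕ} (hN : par^[N] v = r) (Q : V → Prop) [DecidablePred Q] :
    {u | Ancestor par u v ∧ u ≠ r ∧ Q u}.ncard ≤ #{n ∈ range N | Q (par^[n] v)} := by
  classical
  have hsub : {u | Ancestor par u v ∧ u ≠ r ∧ Q u} ⊆
      ↑({n ∈ range N | Q (par^[n] v)}.image fun n => par^[n] v) := by
    rintro u ⟨⟨n, rfl⟩, hr, hQ⟩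
    have hn : n < N := by
      by_contra! hle
      obtain ⟨k, rfl⟩ := Nat.exists_eq_add_of_le hle
      exact hr (by rw [add_comm, Function.iterate_add_apply, hN, Function.iterate_fixed hroot])
    simp only [coe_image, coe_filter, mem_range]
    exact ⟨n, ⟨hn, hQ⟩, rfl⟩
  calc _ ≤ _ := Set.ncard_le_ncard hsub (finite_toSet _)
    _ ≤ _ := by rw [Set.ncard_coe_finset]; exact card_image_le

theorem light_depth_bound_general {V : Type*} [Fintype V] (r : V) (par : V → V)
    (hroot : par r = r)
    (hreach : ∀ v : V, ∃ n : ℕ, par^[n] v = r)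
    (w : V → ℕ) (hw : ∀ v : V, 1 ≤ w v) (s₁ s₂ : V) (v : V) :
    {u : V | Ancestor par u v ∧ u ≠ r ∧ ¬ Heavy par w s₁ s₂ u}.ncard ≤
      Nat.log 2 (Wt par w r / Wt par w v) + 2 := by
  classical
  obtain ⟨N, hN⟩ := hreach v
  set f : ℕ → V := fun n => par^[n] v
  have hf : ∀ n, f (n + 1) = par (f n) := fun n => Function.iterate_succ_apply' par n v
  have hlight (n : ℕ) (_ : n ∈ range N) (h : ¬ Heavy par w s₁ s₂ (f n)) :
      2 * Wt par w (f n) ≤ Wt par w (f (n + 1)) ∨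
        (¬ Ancestor par (f n) s₁ ∧ Ancestor par (f (n + 1)) s₁) ∨
        (¬ Ancestor par (f n) s₂ ∧ Ancestor par (f (n + 1)) s₂) := by
    simpa only [hf] using not_heavy_cases par w h
  have hdouble := card_filter_doubling_le_log (Wt_monotone_iterate par w v)
    (le_Wt par w v |>.trans' (hw v)) N
  simp only [Function.iterate_zero_apply, hN] at hdouble
  calc _ ≤ #{n ∈ range N | ¬ Heavy par w s₁ s₂ (f n)} := ncard_ancestor_ne_root_le hroot hN _
    _ ≤ _ := card_le_card (monotone_filter_right _ hlight)
    _ ≤ _ := by rw [filter_or, filter_or]; grw [card_union_le, card_union_le]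
    _ ≤ Nat.log 2 (Wt par w r / Wt par w v) + (1 + 1) :=
      add_le_add hdouble <| add_le_add
        (card_filter_not_and_succ_le_one (Ancestor.monotone_iterate par v s₁) _)
        (card_filter_not_and_succ_le_one (Ancestor.monotone_iterate par v s₂) _)

/-- In a rooted tree with positive weights and two selected vertices `s₁`, `s₂`, for
every vertex `v` the number of light vertices among `v, par v, par (par v), …`,
excluding the root `r`, is at most `⌊log₂(W(r) / W(v))⌋ + 2`. -/
theorem light_depth_bound {V : Type*} [Fintype V] (r : V) (par : V → V)
    (hroot : par r = r) (hnr : ∀ v : V, v ≠ r → par v ≠ v)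
    (hreach : ∀ v : V, ∃ n : ℕ, par^[n] v = r)
    (w : V → ℕ) (hw : ∀ v : V, 1 ≤ w v) (s₁ s₂ : V) (v : V) :
    {u : V | Ancestor par u v ∧ u ≠ r ∧ ¬ Heavy par w s₁ s₂ u}.ncard ≤
      Nat.log 2 (Wt par w r / Wt par w v) + 2 :=
  light_depth_bound_general r par hroot hreach w hw s₁ s₂ v
end

section
/- Let G be a simple graph with at least 3 vertices in which every two distinct vertices are biconnected, let e be an edge of G with endpoints u and v, and let P be a path from u to v in G − e (the graph obtained from G by deleting e). Then for every edge g of G − e, either g is an edge of P, or there exists an edge f of P such that g and f lie on a common cycle of G − e. -/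
open SimpleGraph Walk

section

variable {V : Type*} {G : SimpleGraph V}

namespace SimpleGraph.Walk

lemma IsPath.append_of_forall_mem_support {u v w : V} {p : G.Walk u v} {q : G.Walk v w}
    (hp : p.IsPath) (hq : q.IsPath) (h : ∀ x ∈ p.support, x ∈ q.support → x = v) :
    (p.append q).IsPath := by
  rw [isPath_def, support_append, List.nodup_append]
  refine ⟨hp.support_nodup, hq.support_nodup.sublist (List.tail_sublist _), ?_⟩
  rintro x hxp _ hxq rfl
  obtain rfl := h x hxp (List.mem_of_mem_tail hxq)
  have hnd := hq.support_nodup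
  rw [← q.cons_tail_support, List.nodup_cons] at hnd
  exact hnd.1 hxq

lemma IsPath.exists_isPath_first_mem {x y : V} {W : G.Walk x y} (hW : W.IsPath) {T : Set V}
    (hy : y ∈ T) : ∃ z ∈ T, ∃ B : G.Walk x z, B.IsPath ∧ B.support ⊆ W.support ∧
      ∀ w ∈ B.support, w ∈ T → w = z := by
  induction W with
  | nil => exact ⟨_, hy, Walk.nil, .nil, fun _ h => h, by simp⟩
  | @cons x x' y h W ih =>
    rw [cons_isPath_iff] at hW
    by_cases hx : x ∈ T
    · exact ⟨x, hx, Walk.nil, .nil, by simp, by simp⟩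
    obtain ⟨z, hzT, B, hB, hBW, hfirst⟩ := ih hW.1 hy
    refine ⟨z, hzT, cons h B, (cons_isPath_iff _ _).mpr ⟨hB, fun hxB => hW.2 (hBW hxB)⟩,
      List.cons_subset_cons _ hBW, ?_⟩
    simp only [support_cons, List.mem_cons, forall_eq_or_imp]
    exact ⟨fun hxT => absurd hxT hx, hfirst⟩

lemma exists_eq_append_cons_of_mem_edges {u v : V} {e : Sym2 V} (p : G.Walk u v)
    (he : e ∈ p.edges) : ∃ (x y : V) (h : G.Adj x y) (p₁ : G.Walk u x) (p₂ : G.Walk y v),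
      s(x, y) = e ∧ p = p₁.append (cons h p₂) := by
  induction p with
  | nil => simp at he
  | @cons u w v h p ih =>
    rw [edges_cons, List.mem_cons] at he
    rcases he with rfl | he
    · exact ⟨u, w, h, nil, p, rfl, rfl⟩
    · obtain ⟨x, y, hxy, p₁, p₂, rfl, rfl⟩ := ih he
      exact ⟨x, y, hxy, cons h p₁, p₂, rfl, rfl⟩

lemma IsCycle.not_edges_subset_of_isPath {c : V} {C : G.Walk c c} (hC : C.IsCycle)
    {u v : V} {Q : G.Walk u v} (hQ : Q.IsPath) : ¬ C.edges ⊆ Q.edges := by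
  intro hsub
  induction Q with
  | nil => exact hC.not_nil (edges_eq_nil.mp (List.eq_nil_of_subset_nil hsub))
  | @cons p q w h Q ih =>
    rw [cons_isPath_iff] at hQ
    have hp : p ∉ C.support := by
      intro hpC
      have hnb : C.toSubgraph.neighborSet p ⊆ {q} := by
        intro x hx
        rcases List.mem_cons.mp (hsub (adj_toSubgraph_iff_mem_edges.mp hx)) with h' | h'
        · exact Sym2.congr_right.mp h'
        · exact absurd (Q.fst_mem_support_of_mem_edges h') hQ.2
      have := Set.ncard_le_ncard hnb
      rw [hC.ncard_neighborSet_toSubgraph_eq_two hpC, Set.ncard_singleton] at this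
      omega
    refine ih hQ.1 fun f hf => (List.mem_cons.mp (hsub hf)).resolve_left ?_
    rintro rfl
    exact hp (C.fst_mem_support_of_mem_edges hf)

theorem exists_isCycle_mem_edges_of_mem_edges_of_notMem {u v : V} (P Q : G.Walk u v)
    (hQ : Q.IsPath) {g : Sym2 V} (hgQ : g ∈ Q.edges) (hgP : g ∉ P.edges) :
    ∃ f ∈ P.edges, ∃ (c : V) (C : G.Walk c c), C.IsCycle ∧ g ∈ C.edges ∧ f ∈ C.edges := by
  classical
  obtain ⟨a, b, hab, Q₁, Q₂, rfl, rfl⟩ := Q.exists_eq_append_cons_of_mem_edges hgQ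
  have hQ' := hQ.isTrail.edges_nodup
  rw [edges_append, edges_cons, List.nodup_append] at hQ'
  have hgQ₁ : s(a, b) ∉ Q₁.edges := fun h => hQ'.2.2 _ h _ List.mem_cons_self rfl
  have hgQ₂ : s(a, b) ∉ Q₂.edges := (List.nodup_cons.mp hQ'.2.1).1
  let W : G.Walk a b := Q₁.reverse.append (P.append Q₂.reverse)
  have hgW : s(b, a) ∉ W.toPath.1.edges := fun h => by
    have := edges_toPath_subset_edges W h
    simp only [W, edges_append, edges_reverse, List.mem_append, List.mem_reverse,
      Sym2.eq_swap] at this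
    tauto
  let C := cons hab.symm W.toPath.1
  have hC : C.IsCycle := Path.cons_isCycle _ _ hgW
  obtain ⟨f, hfC, hfQ⟩ : ∃ f ∈ C.edges, f ∉ (Q₁.append (cons hab Q₂)).edges := by
    by_contra! h
    exact hC.not_edges_subset_of_isPath hQ h
  refine ⟨f, ?_, b, C, hC, by simp [C, Sym2.eq_swap], hfC⟩
  rcases List.mem_cons.mp hfC with rfl | hf
  · exact absurd (by simp [Sym2.eq_swap]) hfQ
  · have := edges_toPath_subset_edges W hf
    simp only [W, edges_append, edges_reverse, edges_cons, List.mem_append,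
      List.mem_reverse, List.mem_cons] at this hfQ
    tauto

lemma exists_fan_of_isPath_to_cycle {a u v z : V} {p₁ p₂ : G.Walk a u} (hp₁ : p₁.IsPath)
    (hp₂ : p₂.IsPath) (hp : ∀ x ∈ p₁.support, x ∈ p₂.support → x = a ∨ x = u)
    (hz : z ∈ p₁.support) (hzu : z ≠ u) {B : G.Walk v z} (hB : B.IsPath)
    (hBfirst : ∀ x ∈ B.support, x ∈ p₁.support ∨ x ∈ p₂.support → x = z) :
    ∃ (A₁ : G.Walk a u) (A₂ : G.Walk a v), A₁.IsPath ∧ A₂.IsPath ∧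
      ∀ x ∈ A₁.support, x ∈ A₂.support → x = a := by
  classical
  have huz : u ∉ (p₁.takeUntil z hz).support := endpoint_notMem_support_takeUntil hp₁ hz hzu.symm
  refine ⟨p₂, (p₁.takeUntil z hz).append B.reverse, hp₂, ?_, ?_⟩
  · refine (hp₁.takeUntil hz).append_of_forall_mem_support hB.reverse fun x hx hxB => ?_
    rw [support_reverse, List.mem_reverse] at hxB
    exact hBfirst x hxB (Or.inl (p₁.support_takeUntil_subset_support hz hx))
  · intro x hx₂ hx
    rw [mem_support_append_iff, support_reverse, List.mem_reverse] at hx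
    rcases hx with hx | hx
    · refine (hp x (p₁.support_takeUntil_subset_support hz hx) hx₂).resolve_right ?_
      rintro rfl
      exact huz hx
    · obtain rfl := hBfirst x hx (Or.inr hx₂)
      exact (hp x hz hx₂).resolve_right hzu

lemma exists_isPath_mem_edges_of_isPath_to_fan {a b u v z : V} (hab : G.Adj a b) {A₁ : G.Walk a u}
    {A₂ : G.Walk a v} (hA₁ : A₁.IsPath) (hA₂ : A₂.IsPath)
    (hA : ∀ x ∈ A₁.support, x ∈ A₂.support → x = a) (hz : z ∈ A₁.support) (hza : z ≠ a)
    {B : G.Walk b z} (hB : B.IsPath)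
    (hBfirst : ∀ x ∈ B.support, x ∈ A₁.support ∨ x ∈ A₂.support → x = z) :
    ∃ Q : G.Walk u v, Q.IsPath ∧ s(a, b) ∈ Q.edges := by
  classical
  have hz' : z ∈ A₁.reverse.support := by rwa [support_reverse, List.mem_reverse]
  set R := A₁.reverse.takeUntil z hz'
  have hRA₁ : ∀ x ∈ R.support, x ∈ A₁.support := fun x hx => by
    simpa using A₁.reverse.support_takeUntil_subset_support hz' hx
  have haR : a ∉ R.support := endpoint_notMem_support_takeUntil hA₁.reverse hz' hza.symm
  have hzA₂ : z ∉ A₂.support := fun h => hza (hA z hz h)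
  have hRB : (R.append B.reverse).IsPath := by
    refine (hA₁.reverse.takeUntil hz').append_of_forall_mem_support hB.reverse fun x hx hxB => ?_
    rw [support_reverse, List.mem_reverse] at hxB
    exact hBfirst x hxB (Or.inl (hRA₁ x hx))
  have hbA₂ : (cons hab.symm A₂).IsPath := by
    refine (cons_isPath_iff _ _).mpr ⟨hA₂, fun hb => hzA₂ ?_⟩
    rwa [← hBfirst b B.start_mem_support (Or.inr hb)]
  refine ⟨(R.append B.reverse).append (cons hab.symm A₂),
    hRB.append_of_forall_mem_support hbA₂ fun x hx hx' => ?_, by simp [Sym2.eq_swap]⟩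
  rw [support_cons, List.mem_cons] at hx'
  rcases hx' with rfl | hx'
  · rfl
  rw [mem_support_append_iff, support_reverse, List.mem_reverse] at hx
  rcases hx with hx | hx
  · exact absurd (hA x (hRA₁ x hx) hx' ▸ hx) haR
  · exact absurd (hBfirst x hx (Or.inr hx') ▸ hx') hzA₂

end SimpleGraph.Walk

def PairwiseBiconnected (G : SimpleGraph V) : Prop :=
  ∀ a b : V, a ≠ b → Biconnected G a b

namespace PairwiseBiconnected

lemma exists_isPath_notMem_support (hG : PairwiseBiconnected G) {x y z : V} (hzx : z ≠ x)
    (hzy : z ≠ y) : ∃ W : G.Walk x y, W.IsPath ∧ z ∉ W.support := by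
  by_cases hxy : x = y
  · subst hxy
    exact ⟨nil, .nil, by simpa using hzx⟩
  obtain ⟨-, p, q, -, hpq⟩ := hG x y hxy
  by_cases hzp : z ∈ p.1.support
  · refine ⟨q.1, q.2, fun hzq => ?_⟩
    rcases hpq z hzp hzq with rfl | rfl <;> contradiction
  · exact ⟨p.1, p.2, hzp⟩

lemma exists_fan (hG : PairwiseBiconnected G) {a u v : V} (hau : a ≠ u) (huv : u ≠ v) :
    ∃ (A₁ : G.Walk a u) (A₂ : G.Walk a v), A₁.IsPath ∧ A₂.IsPath ∧
      ∀ x ∈ A₁.support, x ∈ A₂.support → x = a := by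
  obtain ⟨-, p₁, p₂, -, hp⟩ := hG a u hau
  obtain ⟨W, hW, huW⟩ := hG.exists_isPath_notMem_support (x := v) huv hau.symm
  obtain ⟨z, hz, B, hB, hBW, hBfirst⟩ := hW.exists_isPath_first_mem
    (T := {x | x ∈ p₁.1.support ∨ x ∈ p₂.1.support}) (Or.inl p₁.1.start_mem_support)
  have hzu : z ≠ u := fun h => huW (hBW (h ▸ B.end_mem_support))
  rcases hz with hz | hz
  · exact exists_fan_of_isPath_to_cycle p₁.2 p₂.2 hp hz hzu hB hBfirst
  · exact exists_fan_of_isPath_to_cycle p₂.2 p₁.2 (fun x h₂ h₁ => hp x h₁ h₂) hz hzu hB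
      fun x hx h => hBfirst x hx h.symm

theorem exists_isPath_mem_edges (hG : PairwiseBiconnected G) {a b u v : V} (hab : G.Adj a b)
    (huv : G.Adj u v) (hne : s(a, b) ≠ s(u, v)) :
    ∃ Q : G.Walk u v, Q.IsPath ∧ s(a, b) ∈ Q.edges := by
  wlog ha : a ≠ u ∧ a ≠ v generalizing a b
  · -- `g ≠ e`, so `b` is not an endpoint of `e` when `a` is
    rw [Sym2.eq_swap]
    refine this hab.symm (by rwa [Sym2.eq_swap]) ⟨?_, ?_⟩ <;> rintro rfl <;>
      simp_all [hab.ne, Sym2.eq_swap]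
  obtain ⟨A₁, A₂, hA₁, hA₂, hA⟩ := hG.exists_fan ha.1 huv.ne
  obtain ⟨W, hW, haW⟩ := hG.exists_isPath_notMem_support (x := b) hab.ne ha.1
  obtain ⟨z, hz, B, hB, hBW, hBfirst⟩ := hW.exists_isPath_first_mem
    (T := {x | x ∈ A₁.support ∨ x ∈ A₂.support}) (Or.inl A₁.end_mem_support)
  have hza : z ≠ a := fun h => haW (hBW (h ▸ B.end_mem_support))
  rcases hz with hz | hz
  · exact exists_isPath_mem_edges_of_isPath_to_fan hab hA₁ hA₂ hA hz hza hB hBfirst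
  · obtain ⟨Q, hQ, hgQ⟩ := exists_isPath_mem_edges_of_isPath_to_fan hab hA₂ hA₁
      (fun x h₂ h₁ => hA x h₁ h₂) hz hza hB fun x hx h => hBfirst x hx h.symm
    exact ⟨Q.reverse, hQ.reverse, by rwa [edges_reverse, List.mem_reverse]⟩

end PairwiseBiconnected

end

theorem edge_on_cycle_with_path_edge_general {V : Type*} (G : SimpleGraph V)
    (hbi : ∀ a b : V, a ≠ b → Biconnected G a b)
    (u v : V) (he : G.Adj u v)
    (P : (G.deleteEdges {s(u, v)}).Path u v)
    (g : Sym2 V) (hg : g ∈ (G.deleteEdges {s(u, v)}).edgeSet) :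
    g ∈ P.1.edges ∨
      ∃ f ∈ P.1.edges, ∃ (c : V) (C : (G.deleteEdges {s(u, v)}).Walk c c),
        C.IsCycle ∧ g ∈ C.edges ∧ f ∈ C.edges := by
  by_cases hgP : g ∈ P.1.edges
  · exact Or.inl hgP
  right
  induction g using Sym2.ind with | _ a b =>
  rw [edgeSet_deleteEdges, Set.mem_sdiff, Set.mem_singleton_iff] at hg
  obtain ⟨Q, hQ, hgQ⟩ := PairwiseBiconnected.exists_isPath_mem_edges hbi hg.1 he hg.2
  have heQ : s(u, v) ∉ Q.edges := fun h => hg.2 (by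
    rw [hQ.eq_adj_toWalk_of_mem_edges h] at hgQ
    simpa using hgQ)
  exact exists_isCycle_mem_edges_of_mem_edges_of_notMem P.1 (Q.toDeleteEdge _ heQ)
    (hQ.transfer _) (by rwa [edges_transfer]) hgP

/-- Let `G` be a simple graph with at least 3 vertices in which every two distinct
vertices are biconnected, let `e` be an edge of `G` with endpoints `u` and `v`, and let
`P` be a path from `u` to `v` in `G − e`. Then for every edge `g` of `G − e`, either `g`
is an edge of `P`, or there exists an edge `f` of `P` such that `g` and `f` lie on a
common cycle of `G − e`. -/
theorem edge_on_cycle_with_path_edge {V : Type*} (G : SimpleGraph V)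
    (h3 : ∃ x y z : V, x ≠ y ∧ x ≠ z ∧ y ≠ z)
    (hbi : ∀ a b : V, a ≠ b → Biconnected G a b)
    (u v : V) (he : G.Adj u v)
    (P : (G.deleteEdges {s(u, v)}).Path u v)
    (g : Sym2 V) (hg : g ∈ (G.deleteEdges {s(u, v)}).edgeSet) :
    g ∈ P.1.edges ∨
      ∃ f ∈ P.1.edges, ∃ (c : V) (C : (G.deleteEdges {s(u, v)}).Walk c c),
        C.IsCycle ∧ g ∈ C.edges ∧ f ∈ C.edges :=
  edge_on_cycle_with_path_edge_general G hbi u v he P g hg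
end
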